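/- arXiv:2204.07605 — 6 statements merged into one kernel-verified Lean document; each statement's English description precedes it below -/
import Mathlib

section
/- For the three-term recurrence polynomials, there exist unique real constants c(n,m,k) for |n−m| ≤ k ≤ n+m such that P_n·P_m = Σ_{k=|n−m|}^{n+m} c(n,m,k) P_k, and these constants satisfy Σ_{k=|n−m|}^{n+m} c(n,m,k) = 1. -/
open Polynomial Finset

lemma lin_sum_eq_zero (P : ℕ → Polynomial ℝ)
    (hd : ∀ n, (P n).natDegree = n) (hl : ∀ n, (P n).leadingCoeff ≠ 0) :
    ∀ s : Finset ℕ, ∀ e : ℕ → ℝ, ∑ k ∈ s, C (e k) * P k = 0 → ∀ k ∈ s, e k = 0 := by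
  intro s
  induction s using Finset.strongInduction with
  | _ s IH =>
    intro e hsum k hk
    have hne : s.Nonempty := ⟨k, hk⟩
    set M := s.max' hne with hM
    have hkey : e M = 0 := by
      have h1 : (∑ j ∈ s, C (e j) * P j).coeff M = 0 := by rw [hsum]; simp
      rw [finset_sum_coeff] at h1
      have h2 : ∀ j ∈ s, (C (e j) * P j).coeff M = if j = M then e M * (P M).leadingCoeff else 0 := by
        intro j hj
        by_cases hjM : j = M
        · subst hjM
          simp [coeff_C_mul, leadingCoeff, hd]
        · have : j < M := lt_of_le_of_ne (s.le_max' j hj) hjM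
          rw [coeff_C_mul, coeff_eq_zero_of_natDegree_lt (by rw [hd]; exact this)]
          simp [hjM]
      rw [Finset.sum_congr rfl h2, Finset.sum_ite_eq' s M _] at h1
      simp [s.max'_mem hne, ← hM] at h1
      rcases h1 (s.max'_mem hne) with h | h
      · exact h
      · exact absurd (leadingCoeff_eq_zero.mpr h) (hl M)
    by_cases hkM : k = M
    · rw [hkM]; exact hkey
    · have herase : ∑ j ∈ s.erase M, C (e j) * P j = 0 := by
        rw [← Finset.sum_erase_add s _ (s.max'_mem hne)] at hsum
        simpa [← hM, hkey] using hsum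
      exact IH (s.erase M) (Finset.erase_ssubset (s.max'_mem hne)) e herase k
        (Finset.mem_erase.mpr ⟨hkM, hk⟩)

lemma lin_deg (a b c : ℕ → ℝ) (P : ℕ → Polynomial ℝ)
    (hc : ∀ n, 0 < c n)
    (hP0 : P 0 = 1) (hP1 : P 1 = X)
    (hrec : ∀ n, 1 ≤ n →
      X * P n = C (a n) * P (n - 1) + C (b n) * P n + C (c n) * P (n + 1)) :
    ∀ n, (P n).natDegree = n ∧ 0 < (P n).leadingCoeff := by
  intro n
  induction n using Nat.strong_induction_on with
  | _ n IH =>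
    match n with
    | 0 => rw [hP0]; simp
    | 1 => rw [hP1]; simp
    | (n+2) =>
      obtain ⟨hd1, hl1⟩ := IH (n+1) (by omega)
      obtain ⟨hd0, hl0⟩ := IH n (by omega)
      have hr := hrec (n+1) (by omega)
      simp only [Nat.add_sub_cancel] at hr
      have hq : P (n+2) = C (c (n+1))⁻¹ *
          (X * P (n+1) - C (a (n+1)) * P n - C (b (n+1)) * P (n+1)) := by
        have hcne : (c (n+1)) ≠ 0 := ne_of_gt (hc (n+1))
        have : C (c (n+1)) * P (n+2) =
            X * P (n+1) - C (a (n+1)) * P n - C (b (n+1)) * P (n+1) := by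
          simp only [show n+1+1 = n+2 from rfl] at hr
          linear_combination -hr
        calc P (n+2) = C (c (n+1))⁻¹ * (C (c (n+1)) * P (n+2)) := by
              rw [← mul_assoc, ← C_mul, inv_mul_cancel₀ hcne, C_1, one_mul]
          _ = _ := by rw [this]
      set q : Polynomial ℝ := X * P (n+1) - C (a (n+1)) * P n - C (b (n+1)) * P (n+1) with hqdef
      have hcoeff : q.coeff (n+2) = (P (n+1)).leadingCoeff := by
        have h1 : (X * P (n+1)).coeff (n+2) = (P (n+1)).coeff (n+1) := by
          rw [coeff_X_mul]
        have h2 : (P n).coeff (n+2) = 0 :=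
          coeff_eq_zero_of_natDegree_lt (by rw [hd0]; omega)
        have h3 : (P (n+1)).coeff (n+2) = 0 :=
          coeff_eq_zero_of_natDegree_lt (by rw [hd1]; omega)
        simp [hqdef, coeff_C_mul, h1, h2, h3, leadingCoeff, hd1]
      have hdegle : q.natDegree ≤ n + 2 := by
        apply le_trans (natDegree_sub_le _ _)
        apply max_le
        · apply le_trans (natDegree_sub_le _ _)
          apply max_le
          · exact le_trans natDegree_mul_le (by rw [natDegree_X, hd1]; omega)
          · exact le_trans natDegree_mul_le (by rw [natDegree_C, hd0]; omega)
        · exact le_trans natDegree_mul_le (by rw [natDegree_C, hd1]; omega)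
      have hPcoeff : (P (n+2)).coeff (n+2) = (c (n+1))⁻¹ * (P (n+1)).leadingCoeff := by
        rw [hq, coeff_C_mul, hcoeff]
      have hPne : (P (n+2)).coeff (n+2) ≠ 0 := by
        rw [hPcoeff]
        exact ne_of_gt (mul_pos (inv_pos.mpr (hc _)) hl1)
      have hPle : (P (n+2)).natDegree ≤ n + 2 := by
        rw [hq]
        exact le_trans natDegree_mul_le (by simp [hdegle])
      have hdeg : (P (n+2)).natDegree = n + 2 :=
        le_antisymm hPle (le_natDegree_of_ne_zero hPne)
      refine ⟨hdeg, ?_⟩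
      rw [leadingCoeff, hdeg, hPcoeff]
      exact mul_pos (inv_pos.mpr (hc _)) hl1

lemma lin_eval1 (a b c : ℕ → ℝ) (P : ℕ → Polynomial ℝ)
    (hc : ∀ n, 0 < c n) (hsum : ∀ n, a n + b n + c n = 1)
    (hP0 : P 0 = 1) (hP1 : P 1 = X)
    (hrec : ∀ n, 1 ≤ n →
      X * P n = C (a n) * P (n - 1) + C (b n) * P n + C (c n) * P (n + 1)) :
    ∀ n, (P n).eval 1 = 1 := by
  intro n
  induction n using Nat.strong_induction_on with
  | _ n IH =>
    match n with
    | 0 => simp [hP0]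
    | 1 => simp [hP1]
    | (n+2) =>
      have h1 := IH (n+1) (by omega)
      have h0 := IH n (by omega)
      have hr := congrArg (Polynomial.eval 1) (hrec (n+1) (by omega))
      simp only [show n+1+1 = n+2 from rfl, Nat.add_sub_cancel, eval_mul, eval_add,
        eval_C, eval_X, h1, h0] at hr
      have hcne : c (n+1) ≠ 0 := ne_of_gt (hc (n+1))
      have hs := hsum (n+1)
      have hz : c (n+1) * (Polynomial.eval 1 (P (n+2)) - 1) = 0 := by nlinarith [hr, hs]
      rcases mul_eq_zero.mp hz with h | h
      · exact absurd h hcne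
      · linarith

lemma lin_span (P : ℕ → Polynomial ℝ)
    (hd : ∀ n, (P n).natDegree = n) (hl : ∀ n, (P n).leadingCoeff ≠ 0) :
    ∀ p : Polynomial ℝ, p ∈ Submodule.span ℝ (Set.range P) := by
  have key : ∀ N, ∀ p : Polynomial ℝ, p.natDegree ≤ N → p ∈ Submodule.span ℝ (Set.range P) := by
    intro N
    induction N with
    | zero =>
      intro p hp
      have : p = C (p.coeff 0) := Polynomial.eq_C_of_natDegree_le_zero hp
      rw [this]
      have hP0 : (P 0) ∈ Submodule.span ℝ (Set.range P) :=
        Submodule.subset_span ⟨0, rfl⟩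
      have h0 : P 0 = C ((P 0).coeff 0) := Polynomial.eq_C_of_natDegree_le_zero (le_of_eq (hd 0))
      have hne0 : (P 0).coeff 0 ≠ 0 := by
        have := hl 0; rwa [leadingCoeff, hd 0] at this
      have heq : C (p.coeff 0) = (p.coeff 0 / (P 0).coeff 0) • P 0 := by
        rw [smul_eq_C_mul]
        conv_rhs => rw [h0]
        rw [← C_mul]
        congr 1
        field_simp
        rw [coeff_C_zero, mul_div_assoc, div_self hne0, mul_one]
      rw [heq]
      exact Submodule.smul_mem _ _ hP0
    | succ N IHN =>
      intro p hp
      by_cases hle : p.natDegree ≤ N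
      · exact IHN p hle
      have hdeg : p.natDegree = N + 1 := by omega
      set r := p.coeff (N+1) / (P (N+1)).leadingCoeff with hr
      set q := p - r • P (N+1) with hq
      have hqc : q.coeff (N+1) = 0 := by
        rw [hq]
        simp only [coeff_sub, coeff_smul, smul_eq_mul]
        have : (P (N+1)).coeff (N+1) = (P (N+1)).leadingCoeff := by rw [leadingCoeff, hd]
        rw [this, hr]
        field_simp [hl (N+1)]
        ring
      have hqd : q.natDegree ≤ N := by
        rw [Polynomial.natDegree_le_iff_coeff_eq_zero]
        intro m hm
        rcases Nat.lt_or_ge (N+1) m with h | h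
        · rw [hq]
          simp only [coeff_sub, coeff_smul, smul_eq_mul]
          rw [coeff_eq_zero_of_natDegree_lt (by omega : p.natDegree < m),
            coeff_eq_zero_of_natDegree_lt (by rw [hd]; omega)]
          ring
        · have : m = N + 1 := by omega
          rw [this]; exact hqc
      have : p = q + r • P (N+1) := by rw [hq]; ring
      rw [this]
      exact Submodule.add_mem _ (IHN q hqd)
        (Submodule.smul_mem _ _ (Submodule.subset_span ⟨N+1, rfl⟩))
  intro p
  exact key p.natDegree p le_rfl

theorem linearization_exists_unique
    (a b c : ℕ → ℝ) (P : ℕ → Polynomial ℝ)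
    (ha0 : a 0 = 0) (hb0 : b 0 = 0)
    (hc : ∀ n, 0 < c n) (hb : ∀ n, 0 ≤ b n) (ha : ∀ n, 0 < a (n + 1))
    (hsum : ∀ n, a n + b n + c n = 1)
    (hP0 : P 0 = 1) (hP1 : P 1 = X)
    (hrec : ∀ n, 1 ≤ n →
      X * P n = C (a n) * P (n - 1) + C (b n) * P n + C (c n) * P (n + 1)) :
    ∀ n m : ℕ, ∃ d : ℕ → ℝ,
      ((∀ k, k ∉ Finset.Icc (Nat.dist n m) (n + m) → d k = 0) ∧
        P n * P m = ∑ k ∈ Finset.Icc (Nat.dist n m) (n + m), C (d k) * P k ∧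
        ∑ k ∈ Finset.Icc (Nat.dist n m) (n + m), d k = 1) ∧
      ∀ d' : ℕ → ℝ,
        ((∀ k, k ∉ Finset.Icc (Nat.dist n m) (n + m) → d' k = 0) ∧
          P n * P m = ∑ k ∈ Finset.Icc (Nat.dist n m) (n + m), C (d' k) * P k) →
        d' = d := by
  have hdl := lin_deg a b c P hc hP0 hP1 hrec
  have hdeg : ∀ n, (P n).natDegree = n := fun n => (hdl n).1
  have hlc : ∀ n, (P n).leadingCoeff ≠ 0 := fun n => ne_of_gt (hdl n).2
  have heval : ∀ n, (P n).eval 1 = 1 := lin_eval1 a b c P hc hsum hP0 hP1 hrec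
  have hli : LinearIndependent ℝ P := by
    rw [linearIndependent_iff']
    intro s g hg i hi
    exact lin_sum_eq_zero P hdeg hlc s g (by simpa [smul_eq_C_mul] using hg) i hi
  have hsp : (⊤ : Submodule ℝ (Polynomial ℝ)) ≤ Submodule.span ℝ (Set.range P) :=
    fun p _ => lin_span P hdeg hlc p
  let B : Module.Basis ℕ ℝ (Polynomial ℝ) := Module.Basis.mk hli hsp
  have hc0 : c 0 = 1 := by have := hsum 0; rw [ha0, hb0] at this; linarith
  have hrec' : ∀ n, X * P n = C (a n) * P (n - 1) + C (b n) * P n + C (c n) * P (n + 1) := by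
    intro n
    cases n with
    | zero => simp [ha0, hb0, hc0, hP0, hP1]
    | succ n => exact hrec (n + 1) (by omega)
  have hreprP : ∀ j, B.repr (P j) = Finsupp.single j 1 := by
    intro j
    have h : P j = B j := (Module.Basis.mk_apply hli hsp j).symm
    rw [h, B.repr_self]
  have hrecon : ∀ (p : Polynomial ℝ) (s : Finset ℕ), (B.repr p).support ⊆ s →
      p = ∑ k ∈ s, C ((B.repr p) k) * P k := by
    intro p s hs
    conv_lhs => rw [← B.linearCombination_repr p]
    rw [Finsupp.linearCombination_apply, Finsupp.sum]
    rw [Finset.sum_subset hs (fun k _ hk => by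
      rw [Finsupp.notMem_support_iff.mp hk]; simp)]
    refine Finset.sum_congr rfl fun k _ => ?_
    rw [smul_eq_C_mul, Module.Basis.mk_apply]
  have hCr : ∀ (r : ℝ) (q : Polynomial ℝ), B.repr (C r * q) = r • B.repr q := by
    intro r q
    rw [← smul_eq_C_mul, map_smul]
  -- the X-shift lemma
  have hX : ∀ (p : Polynomial ℝ), ∀ j ∈ (B.repr (X * p)).support,
      ∃ k ∈ (B.repr p).support, j + 1 = k ∨ j = k ∨ j = k + 1 := by
    intro p j hj
    have hXp : X * p = ∑ k ∈ (B.repr p).support, C ((B.repr p) k) *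
        (C (a k) * P (k - 1) + C (b k) * P k + C (c k) * P (k + 1)) := by
      conv_lhs => rw [hrecon p (B.repr p).support subset_rfl]
      rw [Finset.mul_sum]
      refine Finset.sum_congr rfl fun k _ => ?_
      rw [← hrec' k]; ring
    have hrepr : B.repr (X * p) = ∑ k ∈ (B.repr p).support,
        (((B.repr p) k * a k) • Finsupp.single (k - 1) (1:ℝ) +
          (((B.repr p) k * b k) • Finsupp.single k (1:ℝ) +
           ((B.repr p) k * c k) • Finsupp.single (k + 1) (1:ℝ))) := by
      rw [hXp, map_sum]
      refine Finset.sum_congr rfl fun k _ => ?_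
      rw [mul_add, mul_add]
      simp only [map_add, hCr, hreprP, smul_smul]
      abel
    by_contra hcon
    push_neg at hcon
    rw [Finsupp.mem_support_iff] at hj
    apply hj
    rw [hrepr, Finsupp.finset_sum_apply]
    apply Finset.sum_eq_zero
    intro k hk
    obtain ⟨e1, e2, e3⟩ := hcon k hk
    have h1 : j ≠ k - 1 := by omega
    have h2 : j ≠ k := by omega
    have h3 : j ≠ k + 1 := by omega
    simp [Finsupp.single_apply, Ne.symm h1, Ne.symm h2, Ne.symm h3]
  -- the support lemma
  have hsupp : ∀ m n j, j ∈ (B.repr (P n * P m)).support → n - m ≤ j ∧ j ≤ n + m := by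
    intro m
    induction m using Nat.strong_induction_on with
    | _ m IHm =>
      match m with
      | 0 =>
        intro n j hj
        rw [hP0, mul_one, hreprP] at hj
        simp [Finsupp.support_single_ne_zero] at hj
        omega
      | (m+1) =>
        intro n j hj
        have hid : C (c m) * (P n * P (m + 1)) =
            X * (P n * P m) - C (a m) * (P n * P (m - 1)) - C (b m) * (P n * P m) := by
          linear_combination (-(P n)) * hrec' m
        have hid2 : c m • B.repr (P n * P (m + 1)) =
            B.repr (X * (P n * P m)) - a m • B.repr (P n * P (m - 1))
              - b m • B.repr (P n * P m) := by
          have h := congrArg B.repr hid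
          rwa [map_sub, map_sub, hCr, hCr, hCr] at h
        rw [Finsupp.mem_support_iff] at hj
        have hL : (c m • B.repr (P n * P (m + 1))) j ≠ 0 := by
          simp only [Finsupp.smul_apply, smul_eq_mul]
          exact mul_ne_zero (ne_of_gt (hc m)) hj
        rw [hid2] at hL
        simp only [Finsupp.sub_apply, Finsupp.smul_apply, smul_eq_mul] at hL
        by_cases h1 : (B.repr (X * (P n * P m))) j = 0
        · by_cases h2 : (B.repr (P n * P (m - 1))) j = 0
          · have h3 : (B.repr (P n * P m)) j ≠ 0 := by
              intro h3
              rw [h1, h2, h3] at hL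
              simp at hL
            obtain ⟨hk1, hk2⟩ := IHm m (by omega) n j (Finsupp.mem_support_iff.mpr h3)
            omega
          · obtain ⟨hk1, hk2⟩ := IHm (m - 1) (by omega) n j (Finsupp.mem_support_iff.mpr h2)
            omega
        · obtain ⟨k, hk, hcase⟩ := hX (P n * P m) j (Finsupp.mem_support_iff.mpr h1)
          obtain ⟨hk1, hk2⟩ := IHm m (by omega) n k hk
          omega
  -- assembly
  intro n m
  have hsub : (B.repr (P n * P m)).support ⊆ Finset.Icc (Nat.dist n m) (n + m) := by
    intro j hj
    obtain ⟨h1, h2⟩ := hsupp m n j hj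
    have hj' : j ∈ (B.repr (P m * P n)).support := by rwa [mul_comm (P m) (P n)]
    obtain ⟨h3, h4⟩ := hsupp n m j hj'
    rw [Finset.mem_Icc]
    simp [Nat.dist]
    omega
  refine ⟨fun k => (B.repr (P n * P m)) k, ⟨?_, ?_, ?_⟩, ?_⟩
  · intro k hk
    exact Finsupp.notMem_support_iff.mp (fun hmem => hk (hsub hmem))
  · exact hrecon (P n * P m) _ hsub
  · have heq := hrecon (P n * P m) _ hsub
    have h := congrArg (Polynomial.eval 1) heq
    rw [eval_mul, heval, heval, eval_finset_sum] at h
    simp only [eval_mul, eval_C, heval, mul_one] at h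
    linarith [h]
  · rintro d' ⟨hz', heq'⟩
    have hd'supp : ∀ k, d' k ≠ 0 → k ∈ Finset.Icc (Nat.dist n m) (n + m) := by
      intro k hk
      by_contra hmem
      exact hk (hz' k hmem)
    set h' : ℕ →₀ ℝ := Finsupp.onFinset _ d' hd'supp with hh'
    have hT : Finsupp.linearCombination ℝ P h' = P n * P m := by
      rw [Finsupp.linearCombination_apply, Finsupp.sum]
      rw [Finset.sum_subset (Finsupp.support_onFinset_subset) (fun k _ hk => by
        rw [Finsupp.notMem_support_iff.mp hk]; simp)]
      rw [heq']
      refine Finset.sum_congr rfl fun k _ => ?_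
      rw [smul_eq_C_mul]
      rfl
    have hT2 : Finsupp.linearCombination ℝ P (B.repr (P n * P m)) = P n * P m := by
      have hBP : ⇑B = P := funext (Module.Basis.mk_apply hli hsp)
      rw [← hBP]
      exact B.linearCombination_repr _
    have hzero : h' - B.repr (P n * P m) = 0 := by
      apply linearIndependent_iff.mp hli
      rw [map_sub, hT, hT2, sub_self]
    have hfinal : h' = B.repr (P n * P m) := by
      rwa [sub_eq_zero] at hzero
    funext k
    have : h' k = (B.repr (P n * P m)) k := by rw [hfinal]
    simpa [hh'] using this
end

section
/- Let f : ℝ^r → ℂ be smooth (e.g., polynomial) and define φ_α(n) = ∂^α(P_n ∘ f)(0) for multi-indices α ∈ ℕ^r, where (P_n) generates a polynomial hypergroup on ℕ with linearization coefficients c(m,n,k) ≥ 0. Then φ_α(δ_m * δ_n) := Σ_{k=|m−n|}^{m+n} c(m,n,k) φ_α(k) = Σ_{β≤α} (α choose β) φ_β(m) φ_{α−β}(n) for all m,n ∈ ℕ and all α. In particular, the family (φ_α) is a generalized moment sequence of rank r on the polynomial hypergroup. -/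
open Polynomial

noncomputable section

def pderiv' {r : ℕ} (i : Fin r) (f : (Fin r → ℝ) → ℂ) : (Fin r → ℝ) → ℂ :=
  fun x => deriv (fun t => f (Function.update x i t)) (x i)

/-- The mixed partial derivative `∂^α`. -/
def mpderiv {r : ℕ} (α : Fin r → ℕ) (f : (Fin r → ℝ) → ℂ) : (Fin r → ℝ) → ℂ :=
  (List.finRange r).foldr (fun i g => (pderiv' i)^[α i] g) f

/-- Multi-index binomial coefficient. -/
def mchoose {r : ℕ} (α β : Fin r → ℕ) : ℕ := ∏ i, Nat.choose (α i) (β i)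

section Aux
variable {r : ℕ}


lemma hasDerivAt_comp_update {g : (Fin r → ℝ) → ℂ} (hg : ContDiff ℝ (⊤ : ℕ∞) g)
    (x : Fin r → ℝ) (i : Fin r) (t : ℝ) :
    HasDerivAt (fun s => g (Function.update x i s))
      (fderiv ℝ g (Function.update x i t) (Pi.single i 1)) t :=
  ((hg.differentiable (by simp) _).hasFDerivAt).comp_hasDerivAt t (hasDerivAt_update x i t)

lemma pderiv'_eq {g : (Fin r → ℝ) → ℂ} (hg : ContDiff ℝ (⊤ : ℕ∞) g) (i : Fin r) :
    pderiv' i g = fun x => fderiv ℝ g x (Pi.single i 1) := by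
  funext x
  have h := hasDerivAt_comp_update hg x i (x i)
  rw [Function.update_eq_self] at h
  exact h.deriv

lemma contDiff_pderiv' {g : (Fin r → ℝ) → ℂ} (hg : ContDiff ℝ (⊤ : ℕ∞) g) (i : Fin r) :
    ContDiff ℝ (⊤ : ℕ∞) (pderiv' i g) := by
  rw [pderiv'_eq hg i]
  exact (hg.fderiv_right (by simp)).clm_apply contDiff_const

lemma pderiv'_mul {g h : (Fin r → ℝ) → ℂ} (hg : ContDiff ℝ (⊤ : ℕ∞) g) (hh : ContDiff ℝ (⊤ : ℕ∞) h)
    (i : Fin r) : pderiv' i (g * h) = pderiv' i g * h + g * pderiv' i h := by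
  funext x
  have Hg := hasDerivAt_comp_update hg x i (x i)
  have Hh := hasDerivAt_comp_update hh x i (x i)
  rw [Function.update_eq_self] at Hg Hh
  simp only [pderiv', Pi.mul_apply, Pi.add_apply]
  rw [deriv_fun_mul Hg.differentiableAt Hh.differentiableAt]
  simp [Function.update_eq_self]

lemma pderiv'_const_mul {g : (Fin r → ℝ) → ℂ} (hg : ContDiff ℝ (⊤ : ℕ∞) g) (c : ℂ) (i : Fin r) :
    pderiv' i (fun x => c * g x) = fun x => c * pderiv' i g x := by
  funext x
  have Hg := hasDerivAt_comp_update hg x i (x i)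
  rw [Function.update_eq_self] at Hg
  simp only [pderiv']
  rw [deriv_const_mul c Hg.differentiableAt]

lemma pderiv'_sum {ι : Type*} {s : Finset ι} {F : ι → (Fin r → ℝ) → ℂ}
    (hF : ∀ k ∈ s, ContDiff ℝ (⊤ : ℕ∞) (F k)) (i : Fin r) :
    pderiv' i (fun x => ∑ k ∈ s, F k x) = fun x => ∑ k ∈ s, pderiv' i (F k) x := by
  funext x
  simp only [pderiv']
  rw [deriv_fun_sum]
  intro k hk
  have Hg := hasDerivAt_comp_update (hF k hk) x i (x i)
  rw [Function.update_eq_self] at Hg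
  exact Hg.differentiableAt


lemma contDiff_csmul {g : (Fin r → ℝ) → ℂ} (hg : ContDiff ℝ (⊤ : ℕ∞) g) (c : ℂ) :
    ContDiff ℝ (⊤ : ℕ∞) (c • g) := by
  have h1 : c • g = fun x => c * g x := by funext x; simp [smul_eq_mul]
  rw [h1]; exact contDiff_const.mul hg

lemma contDiff_mul' {g h : (Fin r → ℝ) → ℂ} (hg : ContDiff ℝ (⊤ : ℕ∞) g) (hh : ContDiff ℝ (⊤ : ℕ∞) h) :
    ContDiff ℝ (⊤ : ℕ∞) (g * h) := hg.mul hh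

lemma pderiv'_smul {g : (Fin r → ℝ) → ℂ} (hg : ContDiff ℝ (⊤ : ℕ∞) g) (c : ℂ) (i : Fin r) :
    pderiv' i (c • g) = c • pderiv' i g := by
  have h1 : c • g = fun x => c * g x := by funext x; simp [smul_eq_mul]
  rw [h1, pderiv'_const_mul hg c i]
  funext x; simp [smul_eq_mul]

lemma pderiv'_sum' {ι : Type*} {s : Finset ι} {F : ι → (Fin r → ℝ) → ℂ}
    (hF : ∀ k ∈ s, ContDiff ℝ (⊤ : ℕ∞) (F k)) (i : Fin r) :
    pderiv' i (∑ k ∈ s, F k) = ∑ k ∈ s, pderiv' i (F k) := by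
  have h1 : (∑ k ∈ s, F k) = fun x => ∑ k ∈ s, F k x := by funext x; simp
  rw [h1, pderiv'_sum hF i]
  funext x; simp

lemma pderiv'_add {g h : (Fin r → ℝ) → ℂ} (hg : ContDiff ℝ (⊤ : ℕ∞) g) (hh : ContDiff ℝ (⊤ : ℕ∞) h)
    (i : Fin r) : pderiv' i (g + h) = pderiv' i g + pderiv' i h := by
  have := pderiv'_sum' (s := ({0, 1} : Finset (Fin 2)))
    (F := fun j => if j = 0 then g else h) (by intro k _; split <;> assumption) i
  simpa [Finset.sum_pair (by decide : (0 : Fin 2) ≠ 1)] using this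

lemma pderiv'_zero (i : Fin r) : pderiv' i (0 : (Fin r → ℝ) → ℂ) = 0 := by
  funext x
  simp only [pderiv', Pi.zero_apply]
  exact deriv_const _ _

lemma contDiff_iter {g : (Fin r → ℝ) → ℂ} (hg : ContDiff ℝ (⊤ : ℕ∞) g) (i : Fin r) (m : ℕ) :
    ContDiff ℝ (⊤ : ℕ∞) ((pderiv' i)^[m] g) := by
  induction m generalizing g with
  | zero => exact hg
  | succ m ih => rw [Function.iterate_succ_apply]; exact ih (contDiff_pderiv' hg i)

lemma iter_zero (i : Fin r) (m : ℕ) : (pderiv' i)^[m] (0 : (Fin r → ℝ) → ℂ) = 0 := by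
  induction m with
  | zero => rfl
  | succ m ih => rw [Function.iterate_succ_apply, pderiv'_zero, ih]

lemma iter_smul {g : (Fin r → ℝ) → ℂ} (hg : ContDiff ℝ (⊤ : ℕ∞) g) (c : ℂ) (i : Fin r) (m : ℕ) :
    (pderiv' i)^[m] (c • g) = c • (pderiv' i)^[m] g := by
  induction m generalizing g with
  | zero => rfl
  | succ m ih =>
    rw [Function.iterate_succ_apply, Function.iterate_succ_apply, pderiv'_smul hg,
      ih (contDiff_pderiv' hg i)]

lemma iter_add {g h : (Fin r → ℝ) → ℂ} (hg : ContDiff ℝ (⊤ : ℕ∞) g) (hh : ContDiff ℝ (⊤ : ℕ∞) h)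
    (i : Fin r) (m : ℕ) :
    (pderiv' i)^[m] (g + h) = (pderiv' i)^[m] g + (pderiv' i)^[m] h := by
  induction m generalizing g h with
  | zero => rfl
  | succ m ih =>
    rw [Function.iterate_succ_apply, Function.iterate_succ_apply, Function.iterate_succ_apply,
      pderiv'_add hg hh, ih (contDiff_pderiv' hg i) (contDiff_pderiv' hh i)]

lemma contDiff_fsum {ι : Type*} {s : Finset ι} {F : ι → (Fin r → ℝ) → ℂ}
    (hF : ∀ k ∈ s, ContDiff ℝ (⊤ : ℕ∞) (F k)) : ContDiff ℝ (⊤ : ℕ∞) (∑ k ∈ s, F k) := by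
  have h1 : (∑ k ∈ s, F k) = fun x => ∑ k ∈ s, F k x := by funext x; simp
  rw [h1]; exact ContDiff.sum hF

lemma iter_sum {ι : Type*} {s : Finset ι} {F : ι → (Fin r → ℝ) → ℂ}
    (hF : ∀ k ∈ s, ContDiff ℝ (⊤ : ℕ∞) (F k)) (i : Fin r) (m : ℕ) :
    (pderiv' i)^[m] (∑ k ∈ s, F k) = ∑ k ∈ s, (pderiv' i)^[m] (F k) := by
  classical
  induction s using Finset.induction with
  | empty => simpa using iter_zero i m
  | @insert k s' hk ih =>
    rw [Finset.sum_insert hk, Finset.sum_insert hk,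
      iter_add (hF k (Finset.mem_insert_self k s'))
        (contDiff_fsum fun j hj => hF j (Finset.mem_insert_of_mem hj)) i m,
      ih fun j hj => hF j (Finset.mem_insert_of_mem hj)]

lemma iter_mul {g h : (Fin r → ℝ) → ℂ} (hg : ContDiff ℝ (⊤ : ℕ∞) g) (hh : ContDiff ℝ (⊤ : ℕ∞) h)
    (i : Fin r) (m : ℕ) :
    (pderiv' i)^[m] (g * h) = ∑ j ∈ Finset.range (m + 1),
      (Nat.choose m j : ℂ) • ((pderiv' i)^[j] g * (pderiv' i)^[m - j] h) := by
  induction m with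
  | zero => simp
  | succ m ih =>
    rw [Function.iterate_succ_apply', ih]
    have hterm : ∀ j ∈ Finset.range (m + 1), ContDiff ℝ (⊤ : ℕ∞)
        ((Nat.choose m j : ℂ) • ((pderiv' i)^[j] g * (pderiv' i)^[m - j] h)) :=
      fun j _ => contDiff_csmul (contDiff_mul' (contDiff_iter hg i j) (contDiff_iter hh i (m-j))) _
    rw [pderiv'_sum' hterm i]
    have hstep : ∀ j, pderiv' i
        ((Nat.choose m j : ℂ) • ((pderiv' i)^[j] g * (pderiv' i)^[m - j] h)) =
        (Nat.choose m j : ℂ) • ((pderiv' i)^[j+1] g * (pderiv' i)^[m - j] h)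
        + (Nat.choose m j : ℂ) • ((pderiv' i)^[j] g * (pderiv' i)^[m - j + 1] h) := by
      intro j
      rw [pderiv'_smul (contDiff_mul' (contDiff_iter hg i j) (contDiff_iter hh i (m-j))),
        pderiv'_mul (contDiff_iter hg i j) (contDiff_iter hh i (m-j)),
        Function.iterate_succ_apply', Function.iterate_succ_apply', smul_add]
    simp only [hstep]
    rw [Finset.sum_add_distrib]
    set A := fun j => (pderiv' i)^[j] g with hA
    set B := fun j => (pderiv' i)^[j] h with hB
    have eS2 : ∑ j ∈ Finset.range (m + 1), (Nat.choose m j : ℂ) • (A j * B (m - j + 1)) =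
        ∑ j ∈ Finset.range m, (Nat.choose m (j+1) : ℂ) • (A (j+1) * B (m - j)) +
          (Nat.choose m 0 : ℂ) • (A 0 * B (m + 1)) := by
      rw [Finset.sum_range_succ']
      congr 1
      apply Finset.sum_congr rfl
      intro j hj
      simp only [Finset.mem_range] at hj
      have : m - (j + 1) + 1 = m - j := by omega
      rw [this]
    have eS1 : ∑ j ∈ Finset.range (m + 1), (Nat.choose m j : ℂ) • (A (j+1) * B (m - j)) =
        ∑ j ∈ Finset.range m, (Nat.choose m j : ℂ) • (A (j+1) * B (m - j)) +
          (Nat.choose m m : ℂ) • (A (m+1) * B 0) := by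
      rw [Finset.sum_range_succ]
      simp
    have eRHS : ∑ j ∈ Finset.range (m + 1 + 1),
        (Nat.choose (m+1) j : ℂ) • (A j * B (m + 1 - j)) =
        (∑ j ∈ Finset.range m, (Nat.choose (m+1) (j+1) : ℂ) • (A (j+1) * B (m - j)) +
          (Nat.choose (m+1) (m+1) : ℂ) • (A (m+1) * B 0)) +
          (Nat.choose (m+1) 0 : ℂ) • (A 0 * B (m + 1)) := by
      rw [Finset.sum_range_succ', Finset.sum_range_succ]
      simp only [Nat.succ_sub_succ, Nat.sub_zero, Nat.sub_self]
    rw [eS1, eS2, eRHS]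
    simp only [Nat.choose_succ_succ, Nat.cast_add, add_smul, Nat.choose_self, Nat.choose_zero_right]
    rw [Finset.sum_add_distrib]
    simp only [Nat.succ_eq_add_one, Nat.choose_succ_self, Nat.cast_zero, zero_smul, add_zero]
    abel


def Dl (L : List (Fin r)) (α : Fin r → ℕ) (g : (Fin r → ℝ) → ℂ) : (Fin r → ℝ) → ℂ :=
  L.foldr (fun i g => (pderiv' i)^[α i] g) g

@[simp] lemma Dl_nil (α : Fin r → ℕ) (g : (Fin r → ℝ) → ℂ) : Dl [] α g = g := rfl

lemma Dl_cons (i : Fin r) (L : List (Fin r)) (α : Fin r → ℕ) (g : (Fin r → ℝ) → ℂ) :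
    Dl (i :: L) α g = (pderiv' i)^[α i] (Dl L α g) := rfl

lemma contDiff_Dl {g : (Fin r → ℝ) → ℂ} (hg : ContDiff ℝ (⊤ : ℕ∞) g) (L : List (Fin r))
    (α : Fin r → ℕ) : ContDiff ℝ (⊤ : ℕ∞) (Dl L α g) := by
  induction L with
  | nil => exact hg
  | cons i L ih => rw [Dl_cons]; exact contDiff_iter ih i _

lemma Dl_congr {g : (Fin r → ℝ) → ℂ} {L : List (Fin r)} {α α' : Fin r → ℕ}
    (h : ∀ j ∈ L, α j = α' j) : Dl L α g = Dl L α' g := by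
  induction L with
  | nil => rfl
  | cons i L ih =>
    rw [Dl_cons, Dl_cons, ih fun j hj => h j (List.mem_cons_of_mem i hj),
      h i List.mem_cons_self]

lemma Dl_smul {g : (Fin r → ℝ) → ℂ} (hg : ContDiff ℝ (⊤ : ℕ∞) g) (L : List (Fin r))
    (α : Fin r → ℕ) (c : ℂ) : Dl L α (c • g) = c • Dl L α g := by
  induction L with
  | nil => rfl
  | cons i L ih => rw [Dl_cons, Dl_cons, ih, iter_smul (contDiff_Dl hg L α)]

lemma Dl_sum {ι : Type*} {s : Finset ι} {F : ι → (Fin r → ℝ) → ℂ}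
    (hF : ∀ k ∈ s, ContDiff ℝ (⊤ : ℕ∞) (F k)) (L : List (Fin r)) (α : Fin r → ℕ) :
    Dl L α (∑ k ∈ s, F k) = ∑ k ∈ s, Dl L α (F k) := by
  induction L with
  | nil => rfl
  | cons i L ih =>
    rw [Dl_cons, ih, iter_sum fun k hk => contDiff_Dl (hF k hk) L α]
    rfl

/-- Multi-index Leibniz rule along a duplicate-free list of coordinates. -/
lemma Dl_mul {g h : (Fin r → ℝ) → ℂ} (hg : ContDiff ℝ (⊤ : ℕ∞) g) (hh : ContDiff ℝ (⊤ : ℕ∞) h)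
    (L : List (Fin r)) (hL : L.Nodup) (α : Fin r → ℕ) :
    Dl L α (g * h) = ∑ β ∈ (Finset.Iic α).filter (fun β => ∀ i, i ∉ L → β i = 0),
      ((L.map fun i => Nat.choose (α i) (β i)).prod : ℂ) •
        (Dl L β g * Dl L (α - β) h) := by
  classical
  induction L with
  | nil =>
    have hset : (Finset.Iic α).filter (fun β => ∀ i, i ∉ ([] : List (Fin r)) → β i = 0)
        = {0} := by
      ext β
      simp only [Finset.mem_filter, Finset.mem_Iic, Finset.mem_singleton, List.not_mem_nil,
        not_false_iff, forall_true_left]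
      constructor
      · rintro ⟨-, h2⟩; funext j; exact h2 j
      · rintro rfl; exact ⟨zero_le, fun i => rfl⟩
    rw [hset, Finset.sum_singleton]
    simp
  | cons i L ih =>
    have hiL : i ∉ L := (List.nodup_cons.mp hL).1
    have hLnd : L.Nodup := (List.nodup_cons.mp hL).2
    set S' := (Finset.Iic α).filter (fun β => ∀ j, j ∉ L → β j = 0) with hS'
    set S := (Finset.Iic α).filter (fun β => ∀ j, j ∉ (i :: L) → β j = 0) with hS
    have hsm : ∀ β, ContDiff ℝ (⊤ : ℕ∞) (Dl L β g * Dl L (α - β) h) :=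
      fun β => contDiff_mul' (contDiff_Dl hg L β) (contDiff_Dl hh L (α - β))
    rw [Dl_cons, ih hLnd,
      iter_sum (fun β _ => contDiff_csmul (hsm β) _)]
    have hterm : ∀ β ∈ S', (pderiv' i)^[α i]
        (((L.map fun j => Nat.choose (α j) (β j)).prod : ℂ) •
          (Dl L β g * Dl L (α - β) h)) =
        ∑ j ∈ Finset.range (α i + 1),
          ((((L.map fun x => Nat.choose (α x) (β x)).prod * Nat.choose (α i) j : ℕ)) : ℂ) •
            ((pderiv' i)^[j] (Dl L β g) * (pderiv' i)^[α i - j] (Dl L (α - β) h)) := by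
      intro β _
      rw [iter_smul (hsm β),
        iter_mul (contDiff_Dl hg L β) (contDiff_Dl hh L (α - β)), Finset.smul_sum]
      apply Finset.sum_congr rfl
      intro j _
      rw [smul_smul, Nat.cast_mul]
    rw [Finset.sum_congr rfl hterm]
    -- now the reindexing
    rw [← Finset.sum_product']
    apply Finset.sum_nbij' (i := fun p => Function.update p.1 i p.2)
      (j := fun γ => (Function.update γ i 0, γ i))
    · rintro ⟨β, j⟩ hp
      simp only [Finset.mem_product, hS', Finset.mem_filter, Finset.mem_Iic,
        Finset.mem_range] at hp
      obtain ⟨⟨hβα, hβ0⟩, hj⟩ := hp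
      simp only [hS, Finset.mem_filter, Finset.mem_Iic]
      constructor
      · intro x
        rcases eq_or_ne x i with rfl | hx
        · simp only [Function.update_self]; omega
        · rw [Function.update_of_ne hx]; exact hβα x
      · intro x hx
        have hxi : x ≠ i := fun h => hx (h ▸ List.mem_cons_self)
        rw [Function.update_of_ne hxi]
        exact hβ0 x fun h => hx (List.mem_cons_of_mem i h)
    · intro γ hγ
      simp only [hS, Finset.mem_filter, Finset.mem_Iic] at hγ
      obtain ⟨hγα, hγ0⟩ := hγ
      simp only [Finset.mem_product, hS', Finset.mem_filter, Finset.mem_Iic, Finset.mem_range]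
      refine ⟨⟨?_, ?_⟩, ?_⟩
      · intro x
        rcases eq_or_ne x i with rfl | hx
        · simp
        · rw [Function.update_of_ne hx]; exact hγα x
      · intro x hx
        rcases eq_or_ne x i with rfl | hxi
        · simp
        · rw [Function.update_of_ne hxi]
          exact hγ0 x (by simp [hx, hxi])
      · exact Nat.lt_succ_of_le (hγα i)
    · rintro ⟨β, j⟩ hp
      simp only [Finset.mem_product, hS', Finset.mem_filter, Finset.mem_Iic,
        Finset.mem_range] at hp
      obtain ⟨⟨hβα, hβ0⟩, hj⟩ := hp
      have hβi : β i = 0 := hβ0 i hiL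
      simp only [Function.update_self, Function.update_idem]
      rw [← hβi, Function.update_eq_self]
    · intro γ hγ
      simp [Function.update_idem, Function.update_eq_self]
    · rintro ⟨β, j⟩ hp
      simp only [Finset.mem_product, hS', Finset.mem_filter, Finset.mem_Iic,
        Finset.mem_range] at hp
      obtain ⟨⟨hβα, hβ0⟩, hj⟩ := hp
      set γ := Function.update β i j with hγ
      have hcoefL : ∀ x ∈ L, Nat.choose (α x) (γ x) = Nat.choose (α x) (β x) := by
        intro x hx
        have : x ≠ i := fun h => hiL (h ▸ hx)
        rw [hγ, Function.update_of_ne this]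
      have hg1 : Dl L γ g = Dl L β g := Dl_congr fun x hx => by
        have : x ≠ i := fun h => hiL (h ▸ hx)
        rw [hγ, Function.update_of_ne this]
      have hh1 : Dl L (α - γ) h = Dl L (α - β) h := Dl_congr fun x hx => by
        have hxi : x ≠ i := fun h => hiL (h ▸ hx)
        simp only [Pi.sub_apply, hγ, Function.update_of_ne hxi]
      rw [List.map_cons, List.prod_cons, Dl_cons, Dl_cons]
      have hγi : γ i = j := Function.update_self i j β
      have hαγi : (α - γ) i = α i - j := by simp [hγi]
      rw [hγi, hαγi, hg1, hh1]
      have hmap : (L.map fun x => Nat.choose (α x) (γ x)) =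
          (L.map fun x => Nat.choose (α x) (β x)) := List.map_congr_left hcoefL
      rw [hmap, Nat.cast_mul, Nat.cast_mul, mul_comm]
lemma mpderiv_eq_Dl (α : Fin r → ℕ) (g : (Fin r → ℝ) → ℂ) :
    mpderiv α g = Dl (List.finRange r) α g := rfl

lemma contDiff_poly_comp {f : (Fin r → ℝ) → ℂ} (hf : ContDiff ℝ (⊤ : ℕ∞) f) (q : Polynomial ℂ) :
    ContDiff ℝ (⊤ : ℕ∞) (fun t => q.eval (f t)) := by
  have : (fun t => q.eval (f t)) =
      fun t => ∑ i ∈ Finset.range (q.natDegree + 1), q.coeff i * (f t) ^ i := by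
    funext t; rw [Polynomial.eval_eq_sum_range]
  rw [this]
  exact ContDiff.sum fun i _ => contDiff_const.mul (hf.pow i)

end Aux

theorem moment_of_derivatives
    (a b c : ℕ → ℝ) (P : ℕ → Polynomial ℝ) (lc : ℕ → ℕ → ℕ → ℝ)
    (ha0 : a 0 = 0) (hb0 : b 0 = 0)
    (hc : ∀ n, 0 < c n) (hb : ∀ n, 0 ≤ b n) (ha : ∀ n, 0 < a (n + 1))
    (hsum : ∀ n, a n + b n + c n = 1)
    (hP0 : P 0 = 1) (hP1 : P 1 = X)
    (hrec : ∀ n, 1 ≤ n →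
      X * P n = C (a n) * P (n - 1) + C (b n) * P n + C (c n) * P (n + 1))
    (hlin : ∀ m n, P m * P n =
      ∑ k ∈ Finset.Icc (Nat.dist m n) (m + n), C (lc m n k) * P k)
    (hnonneg : ∀ m n k, 0 ≤ lc m n k)
    (r : ℕ) (f : (Fin r → ℝ) → ℂ) (hf : ContDiff ℝ (⊤ : ℕ∞) f)
    (φ : (Fin r → ℕ) → ℕ → ℂ)
    (hφ : ∀ (α : Fin r → ℕ) (n : ℕ),
      φ α n = mpderiv α (fun t => Polynomial.aeval (f t) (P n)) 0) :
    ∀ (α : Fin r → ℕ) (m n : ℕ),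
      ∑ k ∈ Finset.Icc (Nat.dist m n) (m + n), (lc m n k : ℂ) * φ α k =
        ∑ β ∈ Finset.Iic α, (mchoose α β : ℂ) * φ β m * φ (α - β) n := by
  intro α m n
  classical
  set g : ℕ → (Fin r → ℝ) → ℂ := fun k t => Polynomial.aeval (f t) (P k) with hg
  have hsmooth : ∀ k, ContDiff ℝ (⊤ : ℕ∞) (g k) := by
    intro k
    have : g k = fun t => ((P k).map (algebraMap ℝ ℂ)).eval (f t) := by
      funext t
      rw [hg]
      simp [Polynomial.aeval_def, Polynomial.eval_map]
    rw [this]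
    exact contDiff_poly_comp hf _
  -- pointwise linearization
  have hkey : g m * g n = ∑ k ∈ Finset.Icc (Nat.dist m n) (m + n), (lc m n k : ℂ) • g k := by
    funext t
    have := congrArg (Polynomial.aeval (f t)) (hlin m n)
    simp only [map_mul, map_sum] at this
    simp only [Pi.mul_apply, Finset.sum_apply, Pi.smul_apply, hg, smul_eq_mul]
    rw [this]
    apply Finset.sum_congr rfl
    intro k _
    simp [Polynomial.aeval_C, Complex.coe_algebraMap]
  -- differentiate both sides at 0
  have hnodup := List.nodup_finRange r
  have hL := Dl_mul (hsmooth m) (hsmooth n) (List.finRange r) hnodup α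
  have hR := Dl_sum (s := Finset.Icc (Nat.dist m n) (m + n))
    (F := fun k => (lc m n k : ℂ) • g k)
    (fun k _ => contDiff_csmul (hsmooth k) _) (List.finRange r) α
  rw [hkey] at hL
  rw [hR] at hL
  -- evaluate at 0
  have hLHS : ∑ k ∈ Finset.Icc (Nat.dist m n) (m + n), (lc m n k : ℂ) * φ α k =
      (∑ k ∈ Finset.Icc (Nat.dist m n) (m + n),
        Dl (List.finRange r) α ((lc m n k : ℂ) • g k)) 0 := by
    rw [Finset.sum_apply]
    apply Finset.sum_congr rfl
    intro k _
    rw [Dl_smul (hsmooth k), Pi.smul_apply, smul_eq_mul, hφ, mpderiv_eq_Dl]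
  rw [hLHS, hL]
  -- now the RHS
  have hfilter : (Finset.Iic α).filter
      (fun β => ∀ i, i ∉ List.finRange r → β i = 0) = Finset.Iic α :=
    Finset.filter_true_of_mem fun β _ => fun i hi => absurd (List.mem_finRange i) hi
  rw [hfilter]
  rw [Finset.sum_apply]
  apply Finset.sum_congr rfl
  intro β hβ
  rw [Pi.smul_apply, smul_eq_mul, Pi.mul_apply]
  rw [hφ, hφ, mpderiv_eq_Dl, mpderiv_eq_Dl, mchoose]
  rw [Fin.prod_univ_def]
  ring

end
end

section
/- Let X be a polynomial hypergroup generated by (P_n) and N a positive integer. Functions φ_k : ℕ → ℂ (k = 0,…,N) form a generalized moment function sequence of rank 1 if and only if φ_k(n) = (P_n ∘ f)^{(k)}(0) for all k ≤ N and n ∈ ℕ, where f(t) = Σ_{j=0}^N (φ_j(1)/j!) t^j. -/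
open Polynomial

theorem deriv_polyEval_aux (Q : Polynomial ℂ) (t : ℝ) :
    deriv (fun s : ℝ => eval (s : ℂ) Q) t = eval (t : ℂ) (derivative Q) :=
  ((Q.hasDerivAt (t : ℂ)).comp_ofReal).deriv

theorem iteratedDeriv_polyEval_aux (Q : Polynomial ℂ) (k : ℕ) :
    iteratedDeriv k (fun t : ℝ => eval (t : ℂ) Q) =
      fun t : ℝ => eval (t : ℂ) (Polynomial.derivative^[k] Q) := by
  induction k with
  | zero => simp
  | succ k ih =>
    rw [iteratedDeriv_succ, ih, Function.iterate_succ_apply']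
    funext t
    exact deriv_polyEval_aux _ t

theorem rank_one_moment_sequence_iff
    (a b c : ℕ → ℝ) (P : ℕ → Polynomial ℝ) (lc : ℕ → ℕ → ℕ → ℝ)
    (ha0 : a 0 = 0) (hb0 : b 0 = 0)
    (hc : ∀ n, 0 < c n) (hb : ∀ n, 0 ≤ b n) (ha : ∀ n, 0 < a (n + 1))
    (hsum : ∀ n, a n + b n + c n = 1)
    (hP0 : P 0 = 1) (hP1 : P 1 = X)
    (hrec : ∀ n, 1 ≤ n →
      X * P n = C (a n) * P (n - 1) + C (b n) * P n + C (c n) * P (n + 1))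
    (hlin : ∀ m n, P m * P n =
      ∑ k ∈ Finset.Icc (Nat.dist m n) (m + n), C (lc m n k) * P k)
    (hnonneg : ∀ m n k, 0 ≤ lc m n k)
    (N : ℕ) (hN : 0 < N)
    (φ : ℕ → ℕ → ℂ)
    (f : ℝ → ℂ)
    (hf : ∀ t, f t = ∑ j ∈ Finset.range (N + 1),
      (φ j 1 / (Nat.factorial j : ℂ)) * (t : ℂ) ^ j) :
    ((φ 0 0 = 1 ∧ ∀ j, j ≤ N → ∀ m n : ℕ,
        ∑ k ∈ Finset.Icc (Nat.dist m n) (m + n), (lc m n k : ℂ) * φ j k =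
          ∑ i ∈ Finset.range (j + 1), (Nat.choose j i : ℂ) * φ i m * φ (j - i) n)) ↔
      (∀ k, k ≤ N → ∀ n : ℕ,
        φ k n = iteratedDeriv k (fun t : ℝ => Polynomial.aeval (f t) (P n)) 0) := by
  -- the complex polynomial whose evaluation is f
  set fC : Polynomial ℂ := ∑ j ∈ Finset.range (N + 1),
    C (φ j 1 / (Nat.factorial j : ℂ)) * X ^ j with hfCdef
  set ψ : ℕ → ℕ → ℂ := fun k n =>
    eval (0 : ℂ) (Polynomial.derivative^[k] (aeval fC (P n))) with hψdef
  -- f t = eval t fC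
  have heval : ∀ t : ℝ, eval (t : ℂ) fC = f t := by
    intro t
    rw [hf, hfCdef, eval_finset_sum]
    refine Finset.sum_congr rfl fun j _ => ?_
    simp
  -- aeval (f t) (P n) = eval t (aeval fC (P n))
  have hfun : ∀ n, (fun t : ℝ => (aeval (f t) (P n) : ℂ)) =
      fun t : ℝ => eval (t : ℂ) (aeval fC (P n)) := by
    intro n
    funext t
    rw [← heval t]
    have := Polynomial.aeval_algHom_apply
      ((Polynomial.aeval (t : ℂ) : Polynomial ℂ →ₐ[ℂ] ℂ).restrictScalars ℝ) fC (P n)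
    simpa using this
  have hIter : ∀ k n, iteratedDeriv k (fun t : ℝ => (aeval (f t) (P n) : ℂ)) 0 = ψ k n := by
    intro k n
    rw [hfun n, iteratedDeriv_polyEval_aux]
    simp [hψdef]
  -- the ψ family satisfies the moment identity
  have hψid : ∀ j m n, ∑ k ∈ Finset.Icc (Nat.dist m n) (m + n), (lc m n k : ℂ) * ψ j k =
      ∑ i ∈ Finset.range (j + 1), (Nat.choose j i : ℂ) * ψ i m * ψ (j - i) n := by
    intro j m n
    have hQ : aeval fC (P m) * aeval fC (P n) =
        ∑ k ∈ Finset.Icc (Nat.dist m n) (m + n), C ((lc m n k : ℂ)) * aeval fC (P k) := by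
      have h := congrArg (aeval fC) (hlin m n)
      rw [map_mul, map_sum] at h
      rw [h]
      refine Finset.sum_congr rfl fun k _ => ?_
      rw [map_mul, aeval_C]
      simp [Polynomial.algebraMap_apply]
    have h2 := congrArg (fun q => eval (0 : ℂ) (Polynomial.derivative^[j] q)) hQ
    rw [Polynomial.iterate_derivative_mul, Polynomial.iterate_derivative_sum,
      Polynomial.eval_finset_sum, Polynomial.eval_finset_sum] at h2
    have hL : ∑ i ∈ Finset.range (j + 1),
        eval (0:ℂ) (Nat.choose j i • (Polynomial.derivative^[j - i] (aeval fC (P m)) *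
          Polynomial.derivative^[i] (aeval fC (P n)))) =
        ∑ i ∈ Finset.range (j + 1), (Nat.choose j i : ℂ) * ψ (j - i) m * ψ i n := by
      refine Finset.sum_congr rfl fun i _ => ?_
      simp [hψdef, nsmul_eq_mul, mul_assoc]
    have hR : ∑ k ∈ Finset.Icc (Nat.dist m n) (m + n),
        eval (0:ℂ) (Polynomial.derivative^[j] (C ((lc m n k : ℂ)) * aeval fC (P k))) =
        ∑ k ∈ Finset.Icc (Nat.dist m n) (m + n), (lc m n k : ℂ) * ψ j k := by
      refine Finset.sum_congr rfl fun k _ => ?_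
      rw [Polynomial.iterate_derivative_C_mul, eval_mul, eval_C]
    rw [Nat.succ_eq_add_one] at h2
    rw [hL, hR] at h2
    rw [← h2]
    conv_rhs => rw [← Finset.sum_range_reflect]
    refine Finset.sum_congr rfl fun i hi => ?_
    have hi' : i ≤ j := Nat.lt_succ_iff.mp (Finset.mem_range.mp hi)
    have e1 : j + 1 - 1 - i = j - i := by omega
    rw [e1, Nat.sub_sub_self hi', Nat.choose_symm hi']
  -- ψ at 1 equals φ at 1
  have hψ1 : ∀ k, k ≤ N → ψ k 1 = φ k 1 := by
    intro k hk
    have hcoeff : fC.coeff k = φ k 1 / (Nat.factorial k : ℂ) := by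
      rw [hfCdef, Polynomial.finset_sum_coeff]
      rw [Finset.sum_eq_single_of_mem k (Finset.mem_range.mpr (by omega))]
      · simp
      · intro j hj hne
        simp [Polynomial.coeff_C_mul, Polynomial.coeff_X_pow, hne.symm]
    have hd : ψ k 1 = Nat.descFactorial (0 + k) k • fC.coeff (0 + k) := by
      rw [hψdef]
      simp only [hP1, aeval_X]
      rw [← Polynomial.coeff_zero_eq_eval_zero, Polynomial.coeff_iterate_derivative]
    rw [hd]
    simp only [Nat.zero_add, Nat.descFactorial_self, hcoeff, nsmul_eq_mul]
    rw [mul_div_cancel₀]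
    exact_mod_cast Nat.factorial_ne_zero k
  -- ψ at 0
  have hψ0 : ∀ j, ψ j 0 = if j = 0 then 1 else 0 := by
    intro j
    rw [hψdef]
    simp only [hP0, map_one]
    cases j with
    | zero => simp
    | succ j => rw [Polynomial.iterate_derivative_one (Nat.succ_pos j)]; simp
  constructor
  · rintro ⟨h00, hmom⟩ k hk n
    rw [hIter k n]
    -- φ at 0 is delta
    have hφ0 : ∀ j, j ≤ N → φ j 0 = if j = 0 then 1 else 0 := by
      have hlc00 : lc 0 0 0 = 1 := by
        have h := congrArg (fun p => eval (0 : ℝ) p) (hlin 0 0)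
        simp [hP0, Nat.dist] at h
        linarith
      intro j
      induction j using Nat.strong_induction_on with
      | _ j ihj =>
        intro hj
        match j with
        | 0 => simp [h00]
        | (j' + 1) =>
          rw [if_neg (Nat.succ_ne_zero j')]
          have hid := hmom (j' + 1) hj 0 0
          have hds : Nat.dist 0 0 = 0 := by simp [Nat.dist]
          rw [hds] at hid
          rw [show (0 + 0 : ℕ) = 0 from rfl, Finset.Icc_self, Finset.sum_singleton] at hid
          rw [hlc00] at hid
          rw [Finset.sum_range_succ, Finset.sum_range_succ'] at hid
          have hmid : ∑ i ∈ Finset.range j', (Nat.choose (j' + 1) (i + 1) : ℂ) *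
              φ (i + 1) 0 * φ (j' + 1 - (i + 1)) 0 = 0 := by
            refine Finset.sum_eq_zero fun i hi => ?_
            have hi' : i < j' := Finset.mem_range.mp hi
            rw [ihj (i + 1) (by omega) (by omega), if_neg (by omega)]
            ring
          rw [hmid] at hid
          simp only [Nat.choose_zero_right, Nat.choose_self, Nat.sub_self, Nat.sub_zero,
            Nat.cast_one, h00] at hid
          push_cast at hid
          linear_combination -hid
    -- coefficient facts for P
    have hcoeffP : ∀ n, 0 < (P n).coeff n ∧ ∀ m, n < m → (P n).coeff m = 0 := by
      intro n
      induction n using Nat.strong_induction_on with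
      | _ n ih =>
        match n with
        | 0 =>
          refine ⟨by simp [hP0], fun m hm => ?_⟩
          rw [hP0, Polynomial.coeff_one, if_neg (by omega)]
        | 1 =>
          refine ⟨by simp [hP1], fun m hm => ?_⟩
          rw [hP1, Polynomial.coeff_X, if_neg (by omega)]
        | (n + 2) =>
          have h1 := ih (n + 1) (by omega)
          have h0 := ih n (by omega)
          have hrec' := hrec (n + 1) (by omega)
          have key : ∀ m : ℕ, (P (n + 1)).coeff m =
              a (n + 1) * (P n).coeff (m + 1) + b (n + 1) * (P (n + 1)).coeff (m + 1) +
                c (n + 1) * (P (n + 2)).coeff (m + 1) := by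
            intro m
            have h := congrArg (fun p => p.coeff (m + 1)) hrec'
            simpa [Polynomial.coeff_X_mul, Polynomial.coeff_C_mul] using h
          constructor
          · have hk := key (n + 1)
            rw [h0.2 (n + 2) (by omega), h1.2 (n + 2) (by omega)] at hk
            simp only [mul_zero, zero_add, add_zero] at hk
            nlinarith [h1.1, hc (n + 1)]
          · intro m hm
            obtain ⟨m', rfl⟩ : ∃ m', m = m' + 1 := ⟨m - 1, by omega⟩
            have hk := key m'
            rw [h0.2 (m' + 1) (by omega), h1.2 (m' + 1) (by omega), h1.2 m' (by omega)] at hk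
            simp only [mul_zero, zero_add, add_zero] at hk
            have := hc (n + 1)
            nlinarith [hk]
    have hlc1 : ∀ n, 0 < lc 1 n (n + 1) := by
      intro n
      have hco := congrArg (fun p => p.coeff (n + 1)) (hlin 1 n)
      simp only [hP1, Polynomial.coeff_X_mul, Polynomial.finset_sum_coeff,
        Polynomial.coeff_C_mul] at hco
      rw [Finset.sum_eq_single_of_mem (n + 1)] at hco
      · nlinarith [(hcoeffP n).1, (hcoeffP (n + 1)).1, hco]
      · simp only [Finset.mem_Icc]
        constructor
        · simp [Nat.dist]; omega
        · omega
      · intro k' hk' hne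
        simp only [Finset.mem_Icc] at hk'
        rw [(hcoeffP k').2 (n + 1) (by omega), mul_zero]
    have main : ∀ n, ∀ j, j ≤ N → φ j n = ψ j n := by
      intro n
      induction n using Nat.strong_induction_on with
      | _ n ih =>
        match n with
        | 0 => intro j hj; rw [hφ0 j hj, hψ0 j]
        | 1 => intro j hj; exact (hψ1 j hj).symm
        | (n + 2) =>
          intro j hj
          have hid_φ := hmom j hj 1 (n + 1)
          have hid_ψ := hψid j 1 (n + 1)
          have hdist : Nat.dist 1 (n + 1) = n := by simp [Nat.dist]
          have hadd : 1 + (n + 1) = n + 1 + 1 := by omega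
          rw [hdist, hadd, Finset.sum_Icc_succ_top (by omega)] at hid_φ hid_ψ
          have hRHS : ∑ i ∈ Finset.range (j + 1),
              (Nat.choose j i : ℂ) * φ i 1 * φ (j - i) (n + 1) =
              ∑ i ∈ Finset.range (j + 1),
              (Nat.choose j i : ℂ) * ψ i 1 * ψ (j - i) (n + 1) := by
            refine Finset.sum_congr rfl fun i hi => ?_
            have hi' : i ≤ j := Nat.lt_succ_iff.mp (Finset.mem_range.mp hi)
            rw [← hψ1 i (le_trans hi' hj),
              ih (n + 1) (by omega) (j - i) (le_trans (Nat.sub_le _ _) hj)]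
          have hlow : ∑ k ∈ Finset.Icc n (n + 1), (lc 1 (n + 1) k : ℂ) * φ j k =
              ∑ k ∈ Finset.Icc n (n + 1), (lc 1 (n + 1) k : ℂ) * ψ j k := by
            refine Finset.sum_congr rfl fun k hk => ?_
            have hk' : k ≤ n + 1 := (Finset.mem_Icc.mp hk).2
            rw [ih k (by omega) j hj]
          have hlcne : (lc 1 (n + 1) (n + 2) : ℂ) ≠ 0 := by
            exact_mod_cast (hlc1 (n + 1)).ne'
          refine mul_left_cancel₀ hlcne ?_
          linear_combination hid_φ - hid_ψ + hRHS - hlow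
    exact main n k hk
  · intro h
    have hφψ : ∀ k, k ≤ N → ∀ n', φ k n' = ψ k n' := fun k hk n' => by
      rw [h k hk n', hIter]
    constructor
    · rw [hφψ 0 (by omega) 0, hψ0]; simp
    · intro j hj m n
      have hL : ∑ k ∈ Finset.Icc (Nat.dist m n) (m + n), (lc m n k : ℂ) * φ j k =
          ∑ k ∈ Finset.Icc (Nat.dist m n) (m + n), (lc m n k : ℂ) * ψ j k :=
        Finset.sum_congr rfl fun k _ => by rw [hφψ j hj k]
      rw [hL, hψid j m n]
      refine Finset.sum_congr rfl fun i hi => ?_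
      have hi' : i ≤ j := Nat.lt_succ_iff.mp (Finset.mem_range.mp hi)
      rw [hφψ i (le_trans hi' hj) m, hφψ (j - i) (le_trans (Nat.sub_le _ _) hj) n]
end

section
/- Suppose two families (φ_α) and (ψ_α), α ∈ ℕ^r with |α| ≤ N, are generalized moment sequences of rank r on a polynomial hypergroup, and φ_α(1) = ψ_α(1) for all |α| ≤ N. Then φ_α = ψ_α identically on ℕ. -/
open Polynomial

noncomputable section

/-! With `m = n = 0` the product formula reads
`φ_α(0) = Σ_{β ≤ α} (α choose β) φ_β(0) φ_{α-β}(0)`, which forces `φ_α(0) = 0` for `α ≠ 0`.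
With `m = 1` it becomes a three-term recurrence in `n` whose top coefficient `c(1, n+1, n+2)`
is nonzero, so `φ_α(n+2)` is determined by `φ_α(n)`, `φ_α(n+1)` and the values `φ_β(1)`,
`φ_{α-β}(n+1)` for `β ≤ α`. Both facts about the linearization coefficients come from
comparing leading coefficients in `P_m P_n = Σ_k c(m,n,k) P_k`, using `deg P_n = n`. -/

theorem degree_eq_of_three_term_recurrence {R : Type*} [Ring R] [NoZeroDivisors R]
    [Nontrivial R] {a b c : ℕ → R} {P : ℕ → R[X]} (hc : ∀ n, c n ≠ 0)
    (hP0 : P 0 = 1) (hP1 : P 1 = X)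
    (hrec : ∀ n, 1 ≤ n →
      X * P n = C (a n) * P (n - 1) + C (b n) * P n + C (c n) * P (n + 1))
    (n : ℕ) : (P n).degree = n := by
  suffices h : ∀ n, (P n).degree = n ∧ (P (n + 1)).degree = ↑(n + 1) from (h n).1
  intro n
  induction n with
  | zero => simp [hP0, hP1]
  | succ n ih =>
    obtain ⟨hn, hn1⟩ := ih
    refine ⟨hn1, ?_⟩
    have hC_mul_lt {k : ℕ} (hk : (P k).degree = k) (hlt : k < n + 2) (x : R) :
        (C x * P k).degree < ↑(n + 2) := by
      rw [← smul_eq_C_mul]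
      exact (degree_smul_le x _).trans_lt (by rw [hk]; exact_mod_cast hlt)
    have hX : (X * P (n + 1)).degree = ↑(n + 2) := by
      rw [(commute_X _).eq, degree_mul_X, hn1]; rfl
    have hlower : (C (a (n + 1)) * P n + C (b (n + 1)) * P (n + 1)).degree <
        (X * P (n + 1)).degree :=
      hX ▸ (degree_add_le _ _).trans_lt
        (max_lt (hC_mul_lt hn (by omega) _) (hC_mul_lt hn1 (by omega) _))
    calc (P (n + 2)).degree = (C (c (n + 1)) * P (n + 2)).degree := (degree_C_mul (hc _)).symm
      _ = (X * P (n + 1) - (C (a (n + 1)) * P n + C (b (n + 1)) * P (n + 1))).degree := by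
        rw [hrec (n + 1) n.succ_pos, Nat.add_sub_cancel, add_sub_cancel_left]
      _ = ↑(n + 2) := by rw [degree_sub_eq_left_of_degree_lt hlower, hX]

theorem coeff_add_eq_of_linearization {R : Type*} [Semiring R] {P : ℕ → R[X]} {l : ℕ → R}
    (hdeg : ∀ k, (P k).natDegree ≤ k) {m n : ℕ}
    (hlin : P m * P n = ∑ k ∈ Finset.Icc (Nat.dist m n) (m + n), C (l k) * P k) :
    l (m + n) * (P (m + n)).coeff (m + n) = (P m).coeff m * (P n).coeff n := by
  have h := congrArg (coeff · (m + n)) hlin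
  simp only [coeff_mul_add_eq_of_natDegree_le (hdeg m) (hdeg n), finsetSum_coeff,
    coeff_C_mul] at h
  rw [h, Finset.sum_eq_single_of_mem (m + n) (Finset.right_mem_Icc.mpr ?_)]
  · intro k hk hne
    rw [coeff_eq_zero_of_natDegree_lt ((hdeg k).trans_lt ?_), mul_zero]
    exact lt_of_le_of_ne (Finset.mem_Icc.mp hk).2 hne
  · unfold Nat.dist; omega

def IsMomentFamily {r : ℕ} (lc : ℕ → ℕ → ℕ → ℝ) (N : ℕ) (φ : (Fin r → ℕ) → ℕ → ℂ) :
    Prop :=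
  ∀ α : Fin r → ℕ, (∑ i, α i) ≤ N → ∀ m n : ℕ,
    ∑ k ∈ Finset.Icc (Nat.dist m n) (m + n), (lc m n k : ℂ) * φ α k =
      ∑ β ∈ Finset.Iic α, (mchoose α β : ℂ) * φ β m * φ (α - β) n

namespace IsMomentFamily

variable {r N : ℕ} {lc : ℕ → ℕ → ℕ → ℝ} {φ ψ : (Fin r → ℕ) → ℕ → ℂ}

theorem apply_zero_of_ne_zero (hφ : IsMomentFamily lc N φ) (hlc : lc 0 0 0 = 1)
    (hφ0 : φ 0 0 = 1) (α : Fin r → ℕ) (hα0 : α ≠ 0) (hα : ∑ i, α i ≤ N) :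
    φ α 0 = 0 := by
  induction α using WellFoundedLT.induction with
  | _ α ih =>
    have h := hφ α hα 0 0
    simp only [Nat.dist_self, add_zero, Finset.Icc_self, Finset.sum_singleton, hlc,
      Complex.ofReal_one, one_mul] at h
    -- the terms `β = α` and `β = 0` each equal `φ α 0`, the others vanish by induction
    rw [Finset.sum_eq_add_of_mem α 0 (Finset.mem_Iic.mpr le_rfl)
      (Finset.mem_Iic.mpr fun _ => Nat.zero_le _) hα0] at h
    · simpa [mchoose, hφ0] using h
    · rintro β hβ ⟨hβα, hβ0⟩
      have hlt : β < α := lt_of_le_of_ne (Finset.mem_Iic.mp hβ) hβα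
      rw [ih β hlt hβ0 ((Fintype.sum_mono hlt.le).trans hα), mul_zero, zero_mul]

theorem lc_mul_apply_add_two (hφ : IsMomentFamily lc N φ) (α : Fin r → ℕ)
    (hα : ∑ i, α i ≤ N) (n : ℕ) :
    (lc 1 (n + 1) (n + 2) : ℂ) * φ α (n + 2) =
      ∑ β ∈ Finset.Iic α, (mchoose α β : ℂ) * φ β 1 * φ (α - β) (n + 1)
        - lc 1 (n + 1) n * φ α n - lc 1 (n + 1) (n + 1) * φ α (n + 1) := by
  have h := hφ α hα 1 (n + 1)
  rw [show Nat.dist 1 (n + 1) = n by unfold Nat.dist; omega,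
    show 1 + (n + 1) = n + 2 by omega, Finset.sum_Icc_succ_top (by omega),
    Finset.sum_Icc_succ_top (by omega), Finset.Icc_self, Finset.sum_singleton] at h
  linear_combination h

theorem eq_of_apply_one_eq (hφ : IsMomentFamily lc N φ) (hψ : IsMomentFamily lc N ψ)
    (hlc0 : lc 0 0 0 = 1) (hlc : ∀ n, lc 1 (n + 1) (n + 2) ≠ 0)
    (hφ0 : φ 0 0 = 1) (hψ0 : ψ 0 0 = 1)
    (hone : ∀ α : Fin r → ℕ, ∑ i, α i ≤ N → φ α 1 = ψ α 1)
    (n : ℕ) : ∀ α : Fin r → ℕ, ∑ i, α i ≤ N → φ α n = ψ α n := by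
  induction n using Nat.twoStepInduction with
  | zero =>
    intro α hα
    obtain rfl | hα0 := eq_or_ne α 0
    · rw [hφ0, hψ0]
    · rw [hφ.apply_zero_of_ne_zero hlc0 hφ0 α hα0 hα,
        hψ.apply_zero_of_ne_zero hlc0 hψ0 α hα0 hα]
  | one => exact hone
  | more n ihn ihn1 =>
    intro α hα
    have hsum : ∑ β ∈ Finset.Iic α, (mchoose α β : ℂ) * φ β 1 * φ (α - β) (n + 1) =
        ∑ β ∈ Finset.Iic α, (mchoose α β : ℂ) * ψ β 1 * ψ (α - β) (n + 1) := by
      refine Finset.sum_congr rfl fun β hβ => ?_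
      have hβα : β ≤ α := Finset.mem_Iic.mp hβ
      rw [hone β ((Fintype.sum_mono hβα).trans hα),
        ihn1 (α - β) ((Fintype.sum_mono tsub_le_self).trans hα)]
    refine mul_left_cancel₀ (Complex.ofReal_ne_zero.mpr (hlc n)) ?_
    rw [hφ.lc_mul_apply_add_two α hα, hψ.lc_mul_apply_add_two α hα, hsum, ihn α hα,
      ihn1 α hα]

end IsMomentFamily

theorem moment_sequence_unique_general
    (a b c : ℕ → ℝ) (P : ℕ → Polynomial ℝ) (lc : ℕ → ℕ → ℕ → ℝ)
    (hc : ∀ n, 0 < c n)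
    (hP0 : P 0 = 1) (hP1 : P 1 = X)
    (hrec : ∀ n, 1 ≤ n →
      X * P n = C (a n) * P (n - 1) + C (b n) * P n + C (c n) * P (n + 1))
    (hlin : ∀ m n, P m * P n =
      ∑ k ∈ Finset.Icc (Nat.dist m n) (m + n), C (lc m n k) * P k)
    (r N : ℕ)
    (φ ψ : (Fin r → ℕ) → ℕ → ℂ)
    (hφ0 : φ 0 0 = 1) (hψ0 : ψ 0 0 = 1)
    (hφ : ∀ α : Fin r → ℕ, (∑ i, α i) ≤ N → ∀ m n : ℕ,
      ∑ k ∈ Finset.Icc (Nat.dist m n) (m + n), (lc m n k : ℂ) * φ α k =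
        ∑ β ∈ Finset.Iic α, (mchoose α β : ℂ) * φ β m * φ (α - β) n)
    (hψ : ∀ α : Fin r → ℕ, (∑ i, α i) ≤ N → ∀ m n : ℕ,
      ∑ k ∈ Finset.Icc (Nat.dist m n) (m + n), (lc m n k : ℂ) * ψ α k =
        ∑ β ∈ Finset.Iic α, (mchoose α β : ℂ) * ψ β m * ψ (α - β) n)
    (hone : ∀ α : Fin r → ℕ, (∑ i, α i) ≤ N → φ α 1 = ψ α 1) :
    ∀ α : Fin r → ℕ, (∑ i, α i) ≤ N → ∀ n : ℕ, φ α n = ψ α n := by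
  have hdeg := degree_eq_of_three_term_recurrence (fun n => (hc n).ne') hP0 hP1 hrec
  have hnatDeg k : (P k).natDegree ≤ k := natDegree_le_of_degree_le (hdeg k).le
  have hlc0 : lc 0 0 0 = 1 := by
    simpa [hP0] using coeff_add_eq_of_linearization hnatDeg (hlin 0 0)
  have hlc n : lc 1 (n + 1) (n + 2) ≠ 0 := by
    have h := coeff_add_eq_of_linearization hnatDeg (hlin 1 (n + 1))
    rw [hP1, coeff_X_one, one_mul, add_comm 1] at h
    exact left_ne_zero_of_mul (h ▸ coeff_ne_zero_of_eq_degree (hdeg (n + 1)))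
  exact fun α hα n =>
    IsMomentFamily.eq_of_apply_one_eq hφ hψ hlc0 hlc hφ0 hψ0 hone n α hα

theorem moment_sequence_unique
    (a b c : ℕ → ℝ) (P : ℕ → Polynomial ℝ) (lc : ℕ → ℕ → ℕ → ℝ)
    (ha0 : a 0 = 0) (hb0 : b 0 = 0)
    (hc : ∀ n, 0 < c n) (hb : ∀ n, 0 ≤ b n) (ha : ∀ n, 0 < a (n + 1))
    (hsum : ∀ n, a n + b n + c n = 1)
    (hP0 : P 0 = 1) (hP1 : P 1 = X)
    (hrec : ∀ n, 1 ≤ n →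
      X * P n = C (a n) * P (n - 1) + C (b n) * P n + C (c n) * P (n + 1))
    (hlin : ∀ m n, P m * P n =
      ∑ k ∈ Finset.Icc (Nat.dist m n) (m + n), C (lc m n k) * P k)
    (hnonneg : ∀ m n k, 0 ≤ lc m n k)
    (r N : ℕ) (hr : 0 < r)
    (φ ψ : (Fin r → ℕ) → ℕ → ℂ)
    (hφ0 : φ 0 0 = 1) (hψ0 : ψ 0 0 = 1)
    (hφ : ∀ α : Fin r → ℕ, (∑ i, α i) ≤ N → ∀ m n : ℕ,
      ∑ k ∈ Finset.Icc (Nat.dist m n) (m + n), (lc m n k : ℂ) * φ α k =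
        ∑ β ∈ Finset.Iic α, (mchoose α β : ℂ) * φ β m * φ (α - β) n)
    (hψ : ∀ α : Fin r → ℕ, (∑ i, α i) ≤ N → ∀ m n : ℕ,
      ∑ k ∈ Finset.Icc (Nat.dist m n) (m + n), (lc m n k : ℂ) * ψ α k =
        ∑ β ∈ Finset.Iic α, (mchoose α β : ℂ) * ψ β m * ψ (α - β) n)
    (hone : ∀ α : Fin r → ℕ, (∑ i, α i) ≤ N → φ α 1 = ψ α 1) :
    ∀ α : Fin r → ℕ, (∑ i, α i) ≤ N → ∀ n : ℕ, φ α n = ψ α n :=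
  moment_sequence_unique_general a b c P lc hc hP0 hP1 hrec hlin r N φ ψ hφ0 hψ0 hφ hψ hone

end
end

section
/- Let G be a commutative group (written additively) and r a positive integer. If m : G → ℂ is a homomorphism into the multiplicative monoid ℂ (m(x+y)=m(x)m(y), m(0)=1) and a_α : G → ℂ are additive functions for multi-indices α ∈ ℕ^r with |α| ≥ 1, then the functions f_α(x) = B_α(a(x))·m(x), where B_α is the multivariate Bell polynomial evaluated at the family (a_β(x))_{β≤α}, satisfy f_α(x+y) = Σ_{β≤α} (α choose β) f_β(x) f_{α−β}(y) for all x, y ∈ G. -/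
open Polynomial

noncomputable section

/-- The multivariate Bell polynomial `B_α` evaluated at the family `v`,
defined through the generating identity
`exp (∑_{0 < β ≤ α} v_β t^β / β!) = ∑_α B_α(v) t^α / α!`. -/
def BellEval {r : ℕ} (α : Fin r → ℕ) (v : (Fin r → ℕ) → ℂ) : ℂ :=
  mpderiv α (fun t => Complex.exp (∑ β ∈ (Finset.Iic α).erase 0,
    v β / (∏ i, Nat.factorial (β i) : ℂ) * ∏ i, (t i : ℂ) ^ (β i))) 0

namespace BellAux

variable {r : ℕ}

abbrev Sm (f : (Fin r → ℝ) → ℂ) : Prop := ContDiff ℝ (⊤ : ℕ∞) f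

lemma update_eq_affine (x : Fin r → ℝ) (i : Fin r) (t : ℝ) :
    Function.update x i t = Function.update x i 0 + t • (Pi.single i 1 : Fin r → ℝ) := by
  funext j
  by_cases h : j = i
  · subst h; simp
  · simp [Function.update_of_ne h, Pi.single_eq_of_ne h]

lemma hasDerivAt_comp_update {f : (Fin r → ℝ) → ℂ} (hf : Differentiable ℝ f)
    (x : Fin r → ℝ) (i : Fin r) (t₀ : ℝ) :
    HasDerivAt (fun t => f (Function.update x i t))
      (fderiv ℝ f (Function.update x i t₀) ((Pi.single i 1 : Fin r → ℝ))) t₀ := by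
  have h1 : HasDerivAt (fun t : ℝ => Function.update x i 0 + t • (Pi.single i 1 : Fin r → ℝ))
      ((Pi.single i 1 : Fin r → ℝ)) t₀ := by
    simpa using ((hasDerivAt_id t₀).smul_const ((Pi.single i 1 : Fin r → ℝ))).const_add
      (Function.update x i 0)
  have h2 := (hf (Function.update x i 0 + t₀ • (Pi.single i 1 : Fin r → ℝ))).hasFDerivAt.comp_hasDerivAt t₀ h1
  have e1 : (fun t : ℝ => f (Function.update x i 0 + t • (Pi.single i 1 : Fin r → ℝ)))
      = fun t => f (Function.update x i t) := by
    funext t; rw [← update_eq_affine]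
  have e2 : Function.update x i 0 + t₀ • (Pi.single i 1 : Fin r → ℝ) = Function.update x i t₀ :=
    (update_eq_affine x i t₀).symm
  rw [e2] at h2
  exact e1 ▸ h2

lemma pderiv'_eq_fderiv {f : (Fin r → ℝ) → ℂ} (hf : Differentiable ℝ f) (i : Fin r) :
    pderiv' i f = fun x => fderiv ℝ f x ((Pi.single i 1 : Fin r → ℝ)) := by
  funext x
  have := (hasDerivAt_comp_update hf x i (x i)).deriv
  rwa [Function.update_eq_self] at this

lemma hasDerivAt_update {f : (Fin r → ℝ) → ℂ} (hf : Differentiable ℝ f)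
    (x : Fin r → ℝ) (i : Fin r) (t₀ : ℝ) :
    HasDerivAt (fun t => f (Function.update x i t))
      (pderiv' i f (Function.update x i t₀)) t₀ := by
  rw [pderiv'_eq_fderiv hf i]
  exact hasDerivAt_comp_update hf x i t₀

lemma Sm.pderiv' {f : (Fin r → ℝ) → ℂ} (hf : Sm f) (i : Fin r) : Sm (pderiv' i f) := by
  rw [pderiv'_eq_fderiv (hf.differentiable (by simp)) i]
  exact (ContinuousLinearMap.apply ℝ ℂ (((Pi.single i 1 : Fin r → ℝ)))).contDiff.comp
    (hf.fderiv_right (by simp))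

end BellAux


namespace BellAux
variable {r : ℕ}

lemma Sm.diff {f : (Fin r → ℝ) → ℂ} (hf : Sm f) : Differentiable ℝ f :=
  hf.differentiable (by simp)

lemma hasDerivAt_upd {f : (Fin r → ℝ) → ℂ} (hf : Sm f) (x : Fin r → ℝ) (i : Fin r) :
    HasDerivAt (fun t => f (Function.update x i t)) (_root_.pderiv' i f x) (x i) := by
  have := hasDerivAt_comp_update hf.diff x i (x i)
  rw [Function.update_eq_self] at this
  rw [pderiv'_eq_fderiv hf.diff]
  exact this

lemma pderiv'_add {f g : (Fin r → ℝ) → ℂ} (hf : Sm f) (hg : Sm g) (i : Fin r) :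
    pderiv' i (f + g) = pderiv' i f + pderiv' i g := by
  funext x
  have h1 := (hasDerivAt_upd hf x i).add (hasDerivAt_upd hg x i)
  exact h1.deriv

lemma pderiv'_smul {f : (Fin r → ℝ) → ℂ} (hf : Sm f) (c : ℂ) (i : Fin r) :
    pderiv' i (c • f) = c • pderiv' i f := by
  funext x
  have h1 := (hasDerivAt_upd hf x i).const_smul c
  exact h1.deriv

lemma pderiv'_mul {f g : (Fin r → ℝ) → ℂ} (hf : Sm f) (hg : Sm g) (i : Fin r) :
    pderiv' i (f * g) = pderiv' i f * g + f * pderiv' i g := by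
  funext x
  have h1 := (hasDerivAt_upd hf x i).mul (hasDerivAt_upd hg x i)
  simp only [Function.update_eq_self] at h1
  exact h1.deriv

lemma pderiv'_const (c : ℂ) (i : Fin r) :
    pderiv' i (fun _ => c) = fun _ => (0 : ℂ) := by
  funext x
  exact (hasDerivAt_const (x i) c).deriv

lemma sm_sum {ι : Type*} {s : Finset ι} {F : ι → (Fin r → ℝ) → ℂ}
    (hF : ∀ j ∈ s, Sm (F j)) : Sm (∑ j ∈ s, F j) := by
  rw [Finset.sum_fn]; exact ContDiff.sum hF

lemma pderiv'_sum {ι : Type*} (s : Finset ι) (F : ι → (Fin r → ℝ) → ℂ)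
    (hF : ∀ j ∈ s, Sm (F j)) (i : Fin r) :
    pderiv' i (∑ j ∈ s, F j) = ∑ j ∈ s, pderiv' i (F j) := by
  induction s using Finset.cons_induction with
  | empty => simp only [Finset.sum_empty]; exact pderiv'_const (0 : ℂ) i
  | cons a s ha ih =>
    rw [Finset.sum_cons, Finset.sum_cons,
      pderiv'_add (hF a (Finset.mem_cons_self a s))
        (sm_sum fun j hj => hF j (Finset.mem_cons_of_mem hj)) i,
      ih (fun j hj => hF j (Finset.mem_cons_of_mem hj))]

lemma sm_iter {f : (Fin r → ℝ) → ℂ} (hf : Sm f) (i : Fin r) (n : ℕ) :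
    Sm ((pderiv' i)^[n] f) := by
  induction n with
  | zero => exact hf
  | succ n ih => rw [Function.iterate_succ_apply']; exact Sm.pderiv' ih i

lemma iter_smul {f : (Fin r → ℝ) → ℂ} (hf : Sm f) (c : ℂ) (i : Fin r) (n : ℕ) :
    (pderiv' i)^[n] (c • f) = c • (pderiv' i)^[n] f := by
  induction n with
  | zero => rfl
  | succ n ih =>
    rw [Function.iterate_succ_apply', Function.iterate_succ_apply', ih,
      pderiv'_smul (sm_iter hf i n) c i]

lemma iter_sum {ι : Type*} (s : Finset ι) (F : ι → (Fin r → ℝ) → ℂ)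
    (hF : ∀ j ∈ s, Sm (F j)) (i : Fin r) (n : ℕ) :
    (pderiv' i)^[n] (∑ j ∈ s, F j) = ∑ j ∈ s, (pderiv' i)^[n] (F j) := by
  induction n with
  | zero => rfl
  | succ n ih =>
    simp only [Function.iterate_succ_apply']
    rw [ih, pderiv'_sum s _ (fun j hj => sm_iter (hF j hj) i n) i]


lemma iter_leibniz {f g : (Fin r → ℝ) → ℂ} (hf : Sm f) (hg : Sm g) (i : Fin r) (n : ℕ) :
    (pderiv' i)^[n] (f * g) = ∑ k ∈ Finset.range (n+1),
      ((n.choose k : ℕ) : ℂ) • ((pderiv' i)^[k] f * (pderiv' i)^[n-k] g) := by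
  induction n with
  | zero => simp
  | succ n ih =>
    have hsm : ∀ k ∈ Finset.range (n+1),
        Sm (((n.choose k : ℕ) : ℂ) • ((pderiv' i)^[k] f * (pderiv' i)^[n-k] g)) :=
      fun k _ => by exact ContDiff.const_smul (((n.choose k : ℕ) : ℂ)) ((sm_iter hf i k).mul (sm_iter hg i (n-k)))
    have step : ∀ k ∈ Finset.range (n+1),
        pderiv' i (((n.choose k : ℕ) : ℂ) • ((pderiv' i)^[k] f * (pderiv' i)^[n-k] g))
        = ((n.choose k : ℕ) : ℂ) • ((pderiv' i)^[k+1] f * (pderiv' i)^[n-k] g)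
          + ((n.choose k : ℕ) : ℂ) • ((pderiv' i)^[k] f * (pderiv' i)^[(n-k)+1] g) := by
      intro k _
      rw [pderiv'_smul (f := (pderiv' i)^[k] f * (pderiv' i)^[n-k] g) (by exact (sm_iter hf i k).mul (sm_iter hg i (n-k))) _ i,
        pderiv'_mul (sm_iter hf i k) (sm_iter hg i (n-k)) i, smul_add,
        ← Function.iterate_succ_apply' (pderiv' i) k f,
        ← Function.iterate_succ_apply' (pderiv' i) (n-k) g]
    rw [Function.iterate_succ_apply', ih, pderiv'_sum _ _ hsm i,
      Finset.sum_congr rfl step, Finset.sum_add_distrib]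
    have e1 : ∀ k ∈ Finset.range (n+1),
        (((n+1).choose (k+1) : ℕ) : ℂ) • ((pderiv' i)^[k+1] f * (pderiv' i)^[n+1-(k+1)] g)
        = ((n.choose k : ℕ) : ℂ) • ((pderiv' i)^[k+1] f * (pderiv' i)^[n-k] g)
          + ((n.choose (k+1) : ℕ) : ℂ) • ((pderiv' i)^[k+1] f * (pderiv' i)^[n-k] g) := by
      intro k _
      rw [Nat.succ_sub_succ, Nat.choose_succ_succ, Nat.cast_add, add_smul]
    rw [Finset.sum_range_succ' _ (n+1), Finset.sum_congr rfl e1, Finset.sum_add_distrib]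
    have e2 : ∑ k ∈ Finset.range (n+1),
        ((n.choose k : ℕ) : ℂ) • ((pderiv' i)^[k] f * (pderiv' i)^[(n-k)+1] g)
        = ∑ k ∈ Finset.range (n+1),
            ((n.choose (k+1) : ℕ) : ℂ) • ((pderiv' i)^[k+1] f * (pderiv' i)^[n-k] g)
          + (((n+1).choose 0 : ℕ) : ℂ) • ((pderiv' i)^[0] f * (pderiv' i)^[n+1-0] g) := by
      rw [Finset.sum_range_succ' _ n, Finset.sum_range_succ _ n]
      have e3 : ∀ k ∈ Finset.range n,
          ((n.choose (k+1) : ℕ) : ℂ) • ((pderiv' i)^[k+1] f * (pderiv' i)^[(n-(k+1))+1] g)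
          = ((n.choose (k+1) : ℕ) : ℂ) • ((pderiv' i)^[k+1] f * (pderiv' i)^[n-k] g) := by
        intro k hk
        have : (n-(k+1))+1 = n-k := by
          have := Finset.mem_range.mp hk; omega
        rw [this]
      rw [Finset.sum_congr rfl e3]
      simp [Nat.choose_succ_self]
    rw [e2]
    abel


def Dl (l : List (Fin r)) (α : Fin r → ℕ) (f : (Fin r → ℝ) → ℂ) : (Fin r → ℝ) → ℂ :=
  l.foldr (fun i g => (pderiv' i)^[α i] g) f

lemma Dl_nil {α : Fin r → ℕ} {f : (Fin r → ℝ) → ℂ} : Dl [] α f = f := rfl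

lemma Dl_cons {i : Fin r} {l : List (Fin r)} {α : Fin r → ℕ} {f : (Fin r → ℝ) → ℂ} :
    Dl (i :: l) α f = (pderiv' i)^[α i] (Dl l α f) := rfl

lemma sm_Dl {f : (Fin r → ℝ) → ℂ} (hf : Sm f) (l : List (Fin r)) (α : Fin r → ℕ) :
    Sm (Dl l α f) := by
  induction l with
  | nil => exact hf
  | cons i l ih => exact sm_iter ih i (α i)

lemma Dl_congr {l : List (Fin r)} {α α' : Fin r → ℕ} {f : (Fin r → ℝ) → ℂ}
    (h : ∀ i ∈ l, α i = α' i) : Dl l α f = Dl l α' f := by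
  induction l with
  | nil => rfl
  | cons i l ih =>
    rw [Dl_cons, Dl_cons, ih (fun j hj => h j (List.mem_cons_of_mem i hj)),
      h i (List.mem_cons_self (a := i) (l := l))]

lemma Dl_zero {l : List (Fin r)} {α : Fin r → ℕ} {f : (Fin r → ℝ) → ℂ}
    (h : ∀ i ∈ l, α i = 0) : Dl l α f = f := by
  induction l with
  | nil => rfl
  | cons i l ih =>
    rw [Dl_cons, h i (List.mem_cons_self (a := i) (l := l)), ih (fun j hj => h j (List.mem_cons_of_mem i hj))]
    rfl

def SS (l : List (Fin r)) (α : Fin r → ℕ) : Finset (Fin r → ℕ) :=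
  (Finset.Iic α).filter (fun β => ∀ i, i ∉ l → β i = 0)

lemma mem_SS {l : List (Fin r)} {α β : Fin r → ℕ} :
    β ∈ SS l α ↔ β ≤ α ∧ ∀ i, i ∉ l → β i = 0 := by
  simp [SS, Finset.mem_filter, Finset.mem_Iic]

instance instDecLEPi {δ : Fin r → ℕ} : DecidablePred (· ≤ δ) :=
  fun γ => decidable_of_iff (∀ i, γ i ≤ δ i) Iff.rfl

lemma Dl_mul (l : List (Fin r)) (α : Fin r → ℕ) {f g : (Fin r → ℝ) → ℂ}
    (hf : Sm f) (hg : Sm g) (hl : l.Nodup) :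
    Dl l α (f * g) = ∑ β ∈ SS l α,
      ((∏ j ∈ l.toFinset, (α j).choose (β j) : ℕ) : ℂ) • (Dl l β f * Dl l (α - β) g) := by
  revert hl
  induction l with
  | nil =>
    intro _
    have hS : SS ([] : List (Fin r)) α = {0} := by
      ext β
      simp only [mem_SS, List.not_mem_nil, not_false_iff, forall_true_left, Finset.mem_singleton]
      constructor
      · rintro ⟨-, h2⟩; funext j; exact h2 j
      · rintro rfl; exact ⟨fun j => Nat.zero_le _, fun j => rfl⟩
    rw [hS, Finset.sum_singleton]
    have : α - 0 = α := by funext j; rfl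
    rw [this]
    simp [Dl_nil]
  | cons i l ih =>
    intro hl
    rw [List.nodup_cons] at hl
    obtain ⟨hil, hln⟩ := hl
    have hsm2 : ∀ β ∈ SS l α,
        Sm (((∏ j ∈ l.toFinset, (α j).choose (β j) : ℕ) : ℂ) • (Dl l β f * Dl l (α - β) g)) :=
      fun β _ => by
        exact ContDiff.const_smul ((∏ j ∈ l.toFinset, (α j).choose (β j) : ℕ) : ℂ)
          ((sm_Dl hf l β).mul (sm_Dl hg l (α - β)))
    rw [Dl_cons, ih hln, iter_sum _ _ hsm2 i (α i)]
    have term : ∀ β ∈ SS l α,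
        (pderiv' i)^[α i] (((∏ j ∈ l.toFinset, (α j).choose (β j) : ℕ) : ℂ) •
            (Dl l β f * Dl l (α - β) g))
        = ∑ k ∈ Finset.range (α i + 1),
            ((((α i).choose k) * ∏ j ∈ l.toFinset, (α j).choose (β j) : ℕ) : ℂ) •
              (Dl (i :: l) (Function.update β i k) f *
                Dl (i :: l) (α - Function.update β i k) g) := by
      intro β hβ
      rw [iter_smul (f := Dl l β f * Dl l (α - β) g)
          (by exact (sm_Dl hf l β).mul (sm_Dl hg l (α - β))) _ i (α i),
        iter_leibniz (sm_Dl hf l β) (sm_Dl hg l (α - β)) i (α i), Finset.smul_sum]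
      refine Finset.sum_congr rfl (fun k _ => ?_)
      have hDf : (pderiv' i)^[k] (Dl l β f) = Dl (i :: l) (Function.update β i k) f := by
        rw [Dl_cons, Function.update_self,
          Dl_congr (α := Function.update β i k) (α' := β)
            (fun j hj => Function.update_of_ne (by rintro rfl; exact hil hj) k β)]
      have hDg : (pderiv' i)^[α i - k] (Dl l (α - β) g)
          = Dl (i :: l) (α - Function.update β i k) g := by
        have h1 : (α - Function.update β i k) i = α i - k := by
          show α i - Function.update β i k i = α i - k
          rw [Function.update_self]
        rw [Dl_cons, h1,
          Dl_congr (α := α - Function.update β i k) (α' := α - β)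
            (fun j hj => by
              show α j - Function.update β i k j = α j - β j
              rw [Function.update_of_ne (by rintro rfl; exact hil hj) k β])]
      rw [hDf, hDg, smul_smul, ← Nat.cast_mul, Nat.mul_comm]
    rw [Finset.sum_congr rfl term, ← Finset.sum_product']
    refine Finset.sum_nbij' (fun p => Function.update p.1 i p.2)
      (fun γ => (Function.update γ i 0, γ i)) ?_ ?_ ?_ ?_ ?_
    · rintro ⟨β, k⟩ hp
      obtain ⟨hβ', hk'⟩ := Finset.mem_product.mp hp
      have hβ : β ≤ α ∧ ∀ j, j ∉ l → β j = 0 := mem_SS.mp hβ'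
      have hk : k < α i + 1 := Finset.mem_range.mp hk'
      show Function.update β i k ∈ SS (i :: l) α
      rw [mem_SS]
      constructor
      · intro j
        by_cases hj : j = i
        · rw [hj, Function.update_self]; exact Nat.lt_succ_iff.mp (hj ▸ hk)
        · rw [Function.update_of_ne hj]; exact hβ.1 j
      · intro j hj
        have hji : j ≠ i := fun h => hj (h ▸ List.mem_cons_self (a := i) (l := l))
        rw [Function.update_of_ne hji]
        exact hβ.2 j (fun h => hj (List.mem_cons_of_mem i h))
    · intro γ hγ'
      have hγ : γ ≤ α ∧ ∀ j, j ∉ i :: l → γ j = 0 := mem_SS.mp hγ'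
      refine Finset.mem_product.mpr ⟨?_, ?_⟩
      · show Function.update γ i 0 ∈ SS l α
        rw [mem_SS]
        constructor
        · intro j
          by_cases hj : j = i
          · rw [hj, Function.update_self]; exact Nat.zero_le _
          · rw [Function.update_of_ne hj]; exact hγ.1 j
        · intro j hj
          by_cases hji : j = i
          · rw [hji, Function.update_self]
          · rw [Function.update_of_ne hji]
            exact hγ.2 j (by
              intro h
              rcases List.mem_cons.mp h with h' | h'
              · exact hji h'
              · exact hj h')
      · show γ i ∈ Finset.range (α i + 1)
        rw [Finset.mem_range]
        have h2 : γ i ≤ α i := hγ.1 i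
        omega
    · rintro ⟨β, k⟩ hp
      obtain ⟨hβ', hk'⟩ := Finset.mem_product.mp hp
      have hβ : β ≤ α ∧ ∀ j, j ∉ l → β j = 0 := mem_SS.mp hβ'
      have hβi : β i = 0 := hβ.2 i hil
      show (Function.update (Function.update β i k) i 0, Function.update β i k i) = (β, k)
      have e : Function.update (Function.update β i k) i 0 = β := by
        funext j
        by_cases hj : j = i
        · subst hj; rw [Function.update_self, hβi]
        · rw [Function.update_of_ne hj, Function.update_of_ne hj]
      rw [e, Function.update_self]
    · intro γ hγ'
      show Function.update (Function.update γ i 0) i (γ i) = γ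
      funext j
      by_cases hj : j = i
      · subst hj; rw [Function.update_self]
      · rw [Function.update_of_ne hj, Function.update_of_ne hj]
    · rintro ⟨β, k⟩ hp
      have hco : (α i).choose k * ∏ j ∈ l.toFinset, (α j).choose (β j)
          = ∏ j ∈ (i :: l).toFinset, (α j).choose (Function.update β i k j) := by
        rw [List.toFinset_cons, Finset.prod_insert (fun h => hil (List.mem_toFinset.mp h)),
          Function.update_self]
        exact congrArg ((α i).choose k * ·) (Finset.prod_congr rfl (fun j hj => by
          rw [Function.update_of_ne (by rintro rfl; exact hil (List.mem_toFinset.mp hj)) k β]))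
      show (((α i).choose k * ∏ j ∈ l.toFinset, (α j).choose (β j) : ℕ) : ℂ) •
          (Dl (i :: l) (Function.update β i k) f * Dl (i :: l) (α - Function.update β i k) g)
        = _
      rw [hco]


lemma mpderiv_eq_Dl (α : Fin r → ℕ) (f : (Fin r → ℝ) → ℂ) :
    mpderiv α f = Dl (List.finRange r) α f := rfl

lemma SS_finRange (α : Fin r → ℕ) : SS (List.finRange r) α = Finset.Iic α := by
  ext β
  rw [mem_SS, Finset.mem_Iic]
  simp [List.mem_finRange]

lemma mpderiv_mul (α : Fin r → ℕ) {f g : (Fin r → ℝ) → ℂ} (hf : Sm f) (hg : Sm g) :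
    mpderiv α (f * g) = ∑ β ∈ Finset.Iic α,
      ((mchoose α β : ℕ) : ℂ) • (mpderiv β f * mpderiv (α - β) g) := by
  rw [mpderiv_eq_Dl, Dl_mul (List.finRange r) α hf hg (List.nodup_finRange r), SS_finRange]
  refine Finset.sum_congr rfl (fun β _ => ?_)
  rw [← mpderiv_eq_Dl, ← mpderiv_eq_Dl]
  congr 2
  rw [List.toFinset_finRange]
  rfl

lemma sm_mpderiv {f : (Fin r → ℝ) → ℂ} (hf : Sm f) (α : Fin r → ℕ) : Sm (mpderiv α f) :=
  sm_Dl hf _ _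

lemma mpderiv_zero_index {f : (Fin r → ℝ) → ℂ} (α : Fin r → ℕ) (h : α = 0) :
    mpderiv α f = f := by
  subst h; exact Dl_zero (fun i _ => rfl)



def Flat (i : Fin r) (n : ℕ) (q : (Fin r → ℝ) → ℂ) : Prop :=
  ∃ k, Sm k ∧ q = fun t => ((t i : ℂ)) ^ n * k t

lemma sm_coord (i : Fin r) : Sm (fun t : Fin r → ℝ => ((t i : ℝ) : ℂ)) :=
  Complex.ofRealCLM.contDiff.comp (ContinuousLinearMap.proj i : (Fin r → ℝ) →L[ℝ] ℝ).contDiff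

lemma Flat.sm {i : Fin r} {n : ℕ} {q : (Fin r → ℝ) → ℂ} (h : Flat i n q) : Sm q := by
  obtain ⟨k, hk, rfl⟩ := h
  exact ((sm_coord i).pow n).mul hk

lemma Flat.mono {i : Fin r} {m n : ℕ} {q : (Fin r → ℝ) → ℂ} (h : Flat i n q) (hm : m ≤ n) :
    Flat i m q := by
  obtain ⟨k, hk, rfl⟩ := h
  refine ⟨fun t => ((t i : ℂ)) ^ (n - m) * k t, ((sm_coord i).pow _).mul hk, ?_⟩
  funext t
  rw [← mul_assoc, ← pow_add, Nat.add_sub_cancel' hm]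

lemma Flat.add {i : Fin r} {n : ℕ} {q₁ q₂ : (Fin r → ℝ) → ℂ}
    (h₁ : Flat i n q₁) (h₂ : Flat i n q₂) : Flat i n (q₁ + q₂) := by
  obtain ⟨k₁, hk₁, rfl⟩ := h₁
  obtain ⟨k₂, hk₂, rfl⟩ := h₂
  exact ⟨fun t => k₁ t + k₂ t, hk₁.add hk₂, by funext t; simp [mul_add]⟩

lemma Flat.mul {i : Fin r} {m n : ℕ} {q₁ q₂ : (Fin r → ℝ) → ℂ}
    (h₁ : Flat i m q₁) (h₂ : Flat i n q₂) : Flat i (m + n) (q₁ * q₂) := by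
  obtain ⟨k₁, hk₁, rfl⟩ := h₁
  obtain ⟨k₂, hk₂, rfl⟩ := h₂
  exact ⟨fun t => k₁ t * k₂ t, hk₁.mul hk₂, by funext t; simp [pow_add]; ring⟩

lemma Flat.mul_sm {i : Fin r} {n : ℕ} {q w : (Fin r → ℝ) → ℂ}
    (h : Flat i n q) (hw : Sm w) : Flat i n (q * w) := by
  obtain ⟨k, hk, rfl⟩ := h
  exact ⟨fun t => k t * w t, hk.mul hw, by funext t; simp [mul_assoc]⟩

lemma Flat.pderiv_ne {i j : Fin r} {n : ℕ} {q : (Fin r → ℝ) → ℂ}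
    (h : Flat i n q) (hij : i ≠ j) : Flat i n (pderiv' j q) := by
  obtain ⟨k, hk, rfl⟩ := h
  refine ⟨pderiv' j k, hk.pderiv' j, ?_⟩
  funext x
  have h1 : (fun s => ((Function.update x j s i : ℂ)) ^ n * k (Function.update x j s))
      = fun s => ((x i : ℂ)) ^ n * k (Function.update x j s) := by
    funext s
    rw [Function.update_of_ne hij s x]
  show deriv (fun s => ((Function.update x j s i : ℂ)) ^ n * k (Function.update x j s)) (x j)
    = ((x i : ℂ)) ^ n * pderiv' j k x
  rw [h1]
  exact ((hasDerivAt_upd hk x j).const_mul (((x i : ℂ)) ^ n)).deriv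

lemma Flat.pderiv_self {i : Fin r} {n : ℕ} {q : (Fin r → ℝ) → ℂ} (h : Flat i n q) :
    Flat i (n - 1) (pderiv' i q) := by
  obtain ⟨k, hk, rfl⟩ := h
  cases n with
  | zero =>
    refine ⟨pderiv' i (fun t => ((t i : ℂ)) ^ 0 * k t),
      (Sm.pderiv' (by exact ((sm_coord i).pow 0).mul hk) i), ?_⟩
    funext t; rw [pow_zero, one_mul]
  | succ n =>
    refine ⟨fun x => ((n : ℂ) + 1) * k x + ((x i : ℂ)) * pderiv' i k x, ?_, ?_⟩
    · exact (contDiff_const.mul hk).add ((sm_coord i).mul (hk.pderiv' i))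
    · funext x
      have hpow : HasDerivAt (fun s : ℝ => ((s : ℂ)) ^ (n + 1))
          ((((n : ℂ)) + 1) * ((x i : ℂ)) ^ n) (x i) := by
        have := (hasDerivAt_pow (n + 1) ((x i : ℂ))).comp_ofReal
        simpa using this
      have hder := hpow.mul (hasDerivAt_upd hk x i)
      simp only [Function.update_eq_self, Pi.mul_def] at hder
      have h1 : (fun s : ℝ => ((Function.update x i s i : ℂ)) ^ (n + 1) *
          k (Function.update x i s))
          = fun s : ℝ => ((s : ℂ)) ^ (n + 1) * k (Function.update x i s) := by
        funext s
        rw [Function.update_self]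
      show deriv (fun s : ℝ => ((Function.update x i s i : ℂ)) ^ (n + 1) *
          k (Function.update x i s)) (x i) = _
      rw [h1, hder.deriv]
      push_cast
      ring


def Emono (c : ℂ) (γ : Fin r → ℕ) : (Fin r → ℝ) → ℂ :=
  fun t => Complex.exp (c * ∏ m, ((t m : ℂ)) ^ (γ m))

def wfun (c : ℂ) (γ : Fin r → ℕ) (j : Fin r) : (Fin r → ℝ) → ℂ :=
  fun t => c * (γ j) * (∏ m ∈ Finset.univ.erase j, ((t m : ℂ)) ^ (γ m)) * ((t j : ℂ)) ^ (γ j - 1)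

lemma sm_monomial (γ : Fin r → ℕ) (s : Finset (Fin r)) :
    Sm (fun t : Fin r → ℝ => ∏ m ∈ s, ((t m : ℂ)) ^ (γ m)) :=
  contDiff_prod (fun m _ => (sm_coord m).pow (γ m))

lemma sm_cexp {p : (Fin r → ℝ) → ℂ} (hp : Sm p) : Sm (fun t => Complex.exp (p t)) :=
  (Complex.contDiff_exp (𝕜 := ℝ)).comp hp

lemma sm_Emono (c : ℂ) (γ : Fin r → ℕ) : Sm (Emono c γ) :=
  sm_cexp (contDiff_const.mul (sm_monomial γ Finset.univ))

lemma sm_wfun (c : ℂ) (γ : Fin r → ℕ) (j : Fin r) : Sm (wfun c γ j) :=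
  ((contDiff_const.mul (sm_monomial γ (Finset.univ.erase j)))).mul ((sm_coord j).pow (γ j - 1))

lemma prod_split (γ : Fin r → ℕ) (x : Fin r → ℝ) (j : Fin r) :
    (∏ m, ((x m : ℂ)) ^ (γ m))
      = ((x j : ℂ)) ^ (γ j) * ∏ m ∈ Finset.univ.erase j, ((x m : ℂ)) ^ (γ m) :=
  (Finset.mul_prod_erase Finset.univ _ (Finset.mem_univ j)).symm

lemma pderiv'_Emono (c : ℂ) (γ : Fin r → ℕ) (j : Fin r) :
    pderiv' j (Emono c γ) = wfun c γ j * Emono c γ := by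
  funext x
  set P : ℂ := ∏ m ∈ Finset.univ.erase j, ((x m : ℂ)) ^ (γ m) with hP
  have hfun : (fun s : ℝ => Emono c γ (Function.update x j s))
      = fun s : ℝ => Complex.exp ((c * P) * ((s : ℂ)) ^ (γ j)) := by
    funext s
    show Complex.exp (c * ∏ m, ((Function.update x j s m : ℂ)) ^ (γ m)) = _
    congr 1
    rw [prod_split γ (Function.update x j s) j]
    have e1 : ∀ m ∈ Finset.univ.erase j, ((Function.update x j s m : ℂ)) ^ (γ m)
        = ((x m : ℂ)) ^ (γ m) := by
      intro m hm
      rw [Function.update_of_ne (Finset.mem_erase.mp hm).1 s x]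
    rw [Finset.prod_congr rfl e1, Function.update_self]
    ring
  have hpow : HasDerivAt (fun s : ℝ => ((s : ℂ)) ^ (γ j))
      (((γ j : ℕ) : ℂ) * ((x j : ℂ)) ^ (γ j - 1)) (x j) := by
    have := (hasDerivAt_pow (γ j) ((x j : ℂ))).comp_ofReal
    simpa using this
  have hder := (hpow.const_mul (c * P)).cexp
  show deriv (fun s : ℝ => Emono c γ (Function.update x j s)) (x j)
    = wfun c γ j x * Emono c γ x
  rw [hfun, hder.deriv]
  have hE : Emono c γ x = Complex.exp ((c * P) * ((x j : ℂ)) ^ (γ j)) := by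
    show Complex.exp _ = _
    congr 1
    rw [prod_split γ x j]
    ring
  rw [← hE]
  show Emono c γ x * (c * P * (((γ j : ℕ) : ℂ) * ((x j : ℂ)) ^ (γ j - 1))) = _
  unfold wfun
  rw [← hP]
  ring

lemma flat_wfun_ne (c : ℂ) (γ : Fin r → ℕ) {i j : Fin r} (hij : i ≠ j) :
    Flat i (γ i) (wfun c γ j) := by
  refine ⟨fun t => c * (γ j) *
    (∏ m ∈ (Finset.univ.erase j).erase i, ((t m : ℂ)) ^ (γ m)) * ((t j : ℂ)) ^ (γ j - 1),
    (contDiff_const.mul (sm_monomial γ _)).mul ((sm_coord j).pow _), ?_⟩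
  funext t
  show c * (γ j) * (∏ m ∈ Finset.univ.erase j, ((t m : ℂ)) ^ (γ m)) * ((t j : ℂ)) ^ (γ j - 1) = _
  rw [← Finset.mul_prod_erase (Finset.univ.erase j) _
    (Finset.mem_erase.mpr ⟨hij, Finset.mem_univ i⟩)]
  ring

lemma flat_wfun_self (c : ℂ) (γ : Fin r → ℕ) (i : Fin r) :
    Flat i (γ i - 1) (wfun c γ i) := by
  refine ⟨fun t => c * (γ i) * ∏ m ∈ Finset.univ.erase i, ((t m : ℂ)) ^ (γ m),
    contDiff_const.mul (sm_monomial γ _), ?_⟩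
  funext t
  show c * (γ i) * (∏ m ∈ Finset.univ.erase i, ((t m : ℂ)) ^ (γ m)) * ((t i : ℂ)) ^ (γ i - 1) = _
  ring

lemma pderiv'_mul_Emono (c : ℂ) (γ : Fin r → ℕ) {q : (Fin r → ℝ) → ℂ} (hq : Sm q) (j : Fin r) :
    pderiv' j (q * Emono c γ) = (pderiv' j q + q * wfun c γ j) * Emono c γ := by
  rw [pderiv'_mul hq (sm_Emono c γ) j, pderiv'_Emono c γ j]
  ring

lemma iter_mul_Emono_ne (c : ℂ) (γ : Fin r → ℕ) {i j : Fin r} (hij : i ≠ j) (k n : ℕ)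
    {q : (Fin r → ℝ) → ℂ} (hq : Sm q) (hfl : Flat i n q) :
    ∃ q', Sm q' ∧ Flat i n q' ∧
      (pderiv' j)^[k] (q * Emono c γ) = q' * Emono c γ := by
  induction k with
  | zero => exact ⟨q, hq, hfl, rfl⟩
  | succ k ih =>
    obtain ⟨q', hq', hfl', heq⟩ := ih
    refine ⟨pderiv' j q' + q' * wfun c γ j,
      (hq'.pderiv' j).add (hq'.mul (sm_wfun c γ j)),
      (hfl'.pderiv_ne hij).add ((hfl'.mul_sm (sm_wfun c γ j)).mono le_rfl |>.mono le_rfl), ?_⟩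
    rw [Function.iterate_succ_apply', heq, pderiv'_mul_Emono c γ hq' j]

lemma iter_mul_Emono_self (c : ℂ) (γ : Fin r → ℕ) (i : Fin r) (k n : ℕ)
    {q : (Fin r → ℝ) → ℂ} (hq : Sm q) (hfl : Flat i n q) :
    ∃ q', Sm q' ∧ Flat i (n - k) q' ∧
      (pderiv' i)^[k] (q * Emono c γ) = q' * Emono c γ := by
  induction k with
  | zero => exact ⟨q, hq, hfl, rfl⟩
  | succ k ih =>
    obtain ⟨q', hq', hfl', heq⟩ := ih
    refine ⟨pderiv' i q' + q' * wfun c γ i,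
      (hq'.pderiv' i).add (hq'.mul (sm_wfun c γ i)),
      ?_, ?_⟩
    · refine Flat.add (hfl'.pderiv_self.mono (by omega))
        (((hfl'.mul (flat_wfun_self c γ i)).mono (by omega)))
    · rw [Function.iterate_succ_apply', heq, pderiv'_mul_Emono c γ hq' i]


lemma Dl_Emono_invariant (c : ℂ) (γ : Fin r → ℕ) (i : Fin r) (l : List (Fin r))
    (hl : l.Nodup) (η : Fin r → ℕ) :
    ((∀ j ∈ l, η j = 0) ∧ Dl l η (Emono c γ) = Emono c γ)
    ∨ ∃ q, Sm q ∧ Flat i (γ i - (if i ∈ l then η i else 0)) q ∧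
        Dl l η (Emono c γ) = q * Emono c γ := by
  revert hl
  induction l with
  | nil => intro _; exact Or.inl ⟨by simp, rfl⟩
  | cons j l ih =>
    intro hl
    rw [List.nodup_cons] at hl
    obtain ⟨hjl, hln⟩ := hl
    rcases ih hln with ⟨hall, heq⟩ | ⟨q, hq, hfl, heq⟩
    · by_cases hηj : η j = 0
      · left
        refine ⟨?_, ?_⟩
        · intro m hm
          rcases List.mem_cons.mp hm with h' | h'
          · rw [h', hηj]
          · exact hall m h'
        · rw [Dl_cons, heq, hηj]
          rfl
      · right
        have hstart : (pderiv' j)^[η j] (Emono c γ)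
            = (pderiv' j)^[η j - 1] (wfun c γ j * Emono c γ) := by
          obtain ⟨p, hp⟩ : ∃ p, η j = p + 1 := ⟨η j - 1, by omega⟩
          rw [hp, Function.iterate_succ_apply, pderiv'_Emono c γ j, Nat.add_sub_cancel]
        by_cases hji : j = i
        · subst hji
          obtain ⟨q', hq', hfl', heq'⟩ := iter_mul_Emono_self c γ j (η j - 1) (γ j - 1)
            (sm_wfun c γ j) (flat_wfun_self c γ j)
          refine ⟨q', hq', ?_, ?_⟩
          · rw [if_pos (List.mem_cons_self (a := j) (l := l))]
            exact hfl'.mono (by omega)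
          · rw [Dl_cons, heq, hstart, heq']
        · have hij : i ≠ j := fun h => hji h.symm
          obtain ⟨q', hq', hfl', heq'⟩ := iter_mul_Emono_ne c γ hij (η j - 1) (γ i)
            (sm_wfun c γ j) (flat_wfun_ne c γ hij)
          refine ⟨q', hq', ?_, ?_⟩
          · have hz : (if i ∈ j :: l then η i else 0) = 0 := by
              by_cases hmem : i ∈ j :: l
              · rw [if_pos hmem]
                rcases List.mem_cons.mp hmem with h' | h'
                · exact absurd h'.symm hji
                · exact hall i h'
              · rw [if_neg hmem]
            rw [hz]
            exact hfl'.mono (by omega)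
          · rw [Dl_cons, heq, hstart, heq']
    · by_cases hji : j = i
      · subst hji
        rw [if_neg hjl, Nat.sub_zero] at hfl
        obtain ⟨q', hq', hfl', heq'⟩ := iter_mul_Emono_self c γ j (η j) (γ j) hq hfl
        refine Or.inr ⟨q', hq', ?_, ?_⟩
        · rw [if_pos (List.mem_cons_self (a := j) (l := l))]
          exact hfl'
        · rw [Dl_cons, heq, heq']
      · have hij : i ≠ j := fun h => hji h.symm
        obtain ⟨q', hq', hfl', heq'⟩ := iter_mul_Emono_ne c γ hij (η j)
          (γ i - (if i ∈ l then η i else 0)) hq hfl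
        refine Or.inr ⟨q', hq', ?_, ?_⟩
        · have hz : (if i ∈ j :: l then η i else 0) = (if i ∈ l then η i else 0) := by
            by_cases hmem : i ∈ l
            · rw [if_pos hmem, if_pos (List.mem_cons_of_mem j hmem)]
            · rw [if_neg hmem, if_neg (fun h => by
                rcases List.mem_cons.mp h with h' | h'
                · exact hji h'.symm
                · exact hmem h')]
          rw [hz]
          exact hfl'
        · rw [Dl_cons, heq, heq']

lemma mpderiv_Emono_eq_zero (c : ℂ) {γ η : Fin r → ℕ} {i : Fin r}
    (hi : η i < γ i) (hη : η ≠ 0) :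
    mpderiv η (Emono c γ) 0 = 0 := by
  rcases Dl_Emono_invariant c γ i (List.finRange r) (List.nodup_finRange r) η with
    ⟨hall, _⟩ | ⟨q, hq, hfl, heq⟩
  · exact absurd (funext fun j => hall j (List.mem_finRange j)) hη
  · rw [mpderiv_eq_Dl, heq]
    rw [if_pos (List.mem_finRange i)] at hfl
    obtain ⟨k, hk, hqe⟩ := hfl.mono (show 1 ≤ γ i - η i by omega)
    show q 0 * Emono c γ 0 = 0
    rw [hqe]
    show (((0 : Fin r → ℝ) i : ℂ)) ^ 1 * k 0 * Emono c γ 0 = 0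
    norm_num

lemma Emono_zero_val (c : ℂ) {γ : Fin r → ℕ} (hγ : γ ≠ 0) : Emono c γ 0 = 1 := by
  obtain ⟨m, hm⟩ : ∃ m, γ m ≠ 0 := by
    by_contra h
    push_neg at h
    exact hγ (funext h)
  show Complex.exp (c * ∏ m, (((0 : Fin r → ℝ) m : ℂ)) ^ (γ m)) = 1
  rw [Finset.prod_eq_zero (Finset.mem_univ m) (by norm_num [hm]), mul_zero, Complex.exp_zero]


def ET (T : Finset (Fin r → ℕ)) (c : (Fin r → ℕ) → ℂ) : (Fin r → ℝ) → ℂ :=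
  fun t => Complex.exp (∑ γ ∈ T, c γ * ∏ m, ((t m : ℂ)) ^ (γ m))

lemma sm_ET (T : Finset (Fin r → ℕ)) (c : (Fin r → ℕ) → ℂ) : Sm (ET T c) :=
  sm_cexp (ContDiff.sum fun γ _ => contDiff_const.mul (sm_monomial γ Finset.univ))

lemma ET_erase (T : Finset (Fin r → ℕ)) (c : (Fin r → ℕ) → ℂ) {γ₀ : Fin r → ℕ}
    (hγ₀ : γ₀ ∈ T) : ET T c = ET (T.erase γ₀) c * Emono (c γ₀) γ₀ := by
  funext t
  show Complex.exp _ = Complex.exp _ * Complex.exp _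
  rw [← Complex.exp_add]
  congr 1
  rw [← Finset.sum_erase_add T _ hγ₀]

lemma mpderiv_ET_erase (δ : Fin r → ℕ) (T : Finset (Fin r → ℕ)) (c : (Fin r → ℕ) → ℂ)
    {γ₀ : Fin r → ℕ} (hγ₀T : γ₀ ∈ T) (hγ₀ : ¬ γ₀ ≤ δ) :
    mpderiv δ (ET T c) 0 = mpderiv δ (ET (T.erase γ₀) c) 0 := by
  obtain ⟨i, hi⟩ : ∃ i, δ i < γ₀ i := by
    by_contra h
    push_neg at h
    exact hγ₀ (fun i => h i)
  have hγ₀0 : γ₀ ≠ 0 := by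
    rintro rfl
    exact hγ₀ (fun i => Nat.zero_le _)
  rw [ET_erase T c hγ₀T, mpderiv_mul δ (sm_ET _ _) (sm_Emono _ _)]
  rw [Finset.sum_apply]
  have hterm : ∀ β ∈ Finset.Iic δ,
      (((mchoose δ β : ℕ) : ℂ) • (mpderiv β (ET (T.erase γ₀) c) *
        mpderiv (δ - β) (Emono (c γ₀) γ₀))) 0
      = if β = δ then mpderiv δ (ET (T.erase γ₀) c) 0 else 0 := by
    intro β hβ
    have hβδ : β ≤ δ := Finset.mem_Iic.mp hβ
    by_cases hcase : β = δ
    · subst hcase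
      rw [if_pos rfl]
      have h1 : β - β = 0 := by funext j; exact Nat.sub_self (β j)
      have h2 : mpderiv (β - β) (Emono (c γ₀) γ₀) = Emono (c γ₀) γ₀ :=
        mpderiv_zero_index _ h1
      have h3 : mchoose β β = 1 := by
        unfold mchoose
        exact Finset.prod_eq_one (fun j _ => Nat.choose_self (β j))
      show ((mchoose β β : ℕ) : ℂ) • (mpderiv β (ET (T.erase γ₀) c) 0 *
        mpderiv (β - β) (Emono (c γ₀) γ₀) 0) = _
      rw [h2, h3, Emono_zero_val (c γ₀) hγ₀0]
      simp
    · rw [if_neg hcase]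
      have hne : δ - β ≠ 0 := by
        intro h
        apply hcase
        funext j
        have h1 : δ j - β j = 0 := congrFun h j
        have h2 : β j ≤ δ j := hβδ j
        omega
      have hlt : (δ - β) i < γ₀ i := by
        have : δ i - β i ≤ δ i := Nat.sub_le _ _
        show δ i - β i < γ₀ i
        omega
      show ((mchoose δ β : ℕ) : ℂ) • (mpderiv β (ET (T.erase γ₀) c) 0 *
        mpderiv (δ - β) (Emono (c γ₀) γ₀) 0) = 0
      rw [mpderiv_Emono_eq_zero (c γ₀) hlt hne]
      simp
  rw [Finset.sum_congr rfl hterm, Finset.sum_ite_eq' (Finset.Iic δ) δ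
    (fun _ => mpderiv δ (ET (T.erase γ₀) c) 0), if_pos (Finset.mem_Iic.mpr le_rfl)]

lemma mpderiv_ET_filter (δ : Fin r → ℕ) (T : Finset (Fin r → ℕ)) (c : (Fin r → ℕ) → ℂ) :
    mpderiv δ (ET T c) 0 = mpderiv δ (ET (T.filter (· ≤ δ)) c) 0 := by
  induction T using Finset.strongInduction with
  | _ T ih =>
    by_cases hall : ∀ γ ∈ T, γ ≤ δ
    · rw [Finset.filter_true_of_mem hall]
    · push_neg at hall
      obtain ⟨γ₀, hmem, hno⟩ := hall
      have hTe : (T.erase γ₀).filter (· ≤ δ) = T.filter (· ≤ δ) := by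
        ext γ
        simp only [Finset.mem_filter, Finset.mem_erase]
        constructor
        · rintro ⟨⟨-, h1⟩, h2⟩; exact ⟨h1, h2⟩
        · rintro ⟨h1, h2⟩
          refine ⟨⟨?_, h1⟩, h2⟩
          rintro rfl
          exact hno h2
      rw [mpderiv_ET_erase δ T c hmem hno, ih (T.erase γ₀) (Finset.erase_ssubset hmem), hTe]

lemma mpderiv_ET_Iic (α β : Fin r → ℕ) (hβ : β ≤ α) (c : (Fin r → ℕ) → ℂ) :
    mpderiv β (ET ((Finset.Iic α).erase 0) c) 0
      = mpderiv β (ET ((Finset.Iic β).erase 0) c) 0 := by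
  rw [mpderiv_ET_filter β ((Finset.Iic α).erase 0) c,
    mpderiv_ET_filter β ((Finset.Iic β).erase 0) c]
  have hset : ((Finset.Iic α).erase 0).filter (· ≤ β)
      = ((Finset.Iic β).erase 0).filter (· ≤ β) := by
    ext γ
    simp only [Finset.mem_filter, Finset.mem_erase, Finset.mem_Iic]
    constructor
    · rintro ⟨⟨h0, -⟩, h2⟩; exact ⟨⟨h0, h2⟩, h2⟩
    · rintro ⟨⟨h0, h1⟩, h2⟩; exact ⟨⟨h0, le_trans h1 hβ⟩, h2⟩
  rw [hset]

lemma BellEval_eq_mpderiv (α : Fin r → ℕ) (v : (Fin r → ℕ) → ℂ) :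
    BellEval α v = mpderiv α
      (ET ((Finset.Iic α).erase 0) (fun β => v β / (∏ i, Nat.factorial (β i) : ℂ))) 0 := rfl

end BellAux

theorem bell_moment_sequence_on_group
    {G : Type*} [AddCommGroup G] (r : ℕ) (hr : 0 < r)
    (m : G → ℂ) (hm0 : m 0 = 1) (hm : ∀ x y, m (x + y) = m x * m y)
    (a : (Fin r → ℕ) → G → ℂ)
    (hadd : ∀ β : Fin r → ℕ, 1 ≤ ∑ i, β i →
      ∀ x y, a β (x + y) = a β x + a β y)
    (f : (Fin r → ℕ) → G → ℂ)
    (hf : ∀ (α : Fin r → ℕ) (x : G), f α x = BellEval α (fun β => a β x) * m x) :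
    ∀ (α : Fin r → ℕ) (x y : G),
      f α (x + y) = ∑ β ∈ Finset.Iic α, (mchoose α β : ℂ) * f β x * f (α - β) y := by

  intro α x y
  have key : BellEval α (fun β => a β (x + y))
      = ∑ β ∈ Finset.Iic α, (mchoose α β : ℂ) *
          (BellEval β (fun β' => a β' x) * BellEval (α - β) (fun β' => a β' y)) := by
    have e1 : BellEval α (fun β => a β (x + y)) = mpderiv α (BellAux.ET
        ((Finset.Iic α).erase 0)
        (fun β => a β (x + y) / (∏ i, Nat.factorial (β i) : ℂ))) 0 := rfl
    have hsplit : BellAux.ET ((Finset.Iic α).erase 0)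
        (fun β => a β (x + y) / (∏ i, Nat.factorial (β i) : ℂ))
        = BellAux.ET ((Finset.Iic α).erase 0)
            (fun β => a β x / (∏ i, Nat.factorial (β i) : ℂ))
          * BellAux.ET ((Finset.Iic α).erase 0)
            (fun β => a β y / (∏ i, Nat.factorial (β i) : ℂ)) := by
      funext t
      show Complex.exp _ = Complex.exp _ * Complex.exp _
      rw [← Complex.exp_add, ← Finset.sum_add_distrib]
      refine congrArg Complex.exp (Finset.sum_congr rfl (fun β hβ => ?_))
      have hβ0 : β ≠ 0 := (Finset.mem_erase.mp hβ).1
      have hs : 1 ≤ ∑ i, β i := by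
        rcases Nat.eq_zero_or_pos (∑ i, β i) with h | h
        · exact absurd (funext fun j =>
            (Finset.sum_eq_zero_iff.mp h) j (Finset.mem_univ j) : β = 0) hβ0
        · exact h
      show a β (x + y) / (∏ i, Nat.factorial (β i) : ℂ) * ∏ m, ((t m : ℂ)) ^ (β m)
        = a β x / (∏ i, Nat.factorial (β i) : ℂ) * ∏ m, ((t m : ℂ)) ^ (β m)
          + a β y / (∏ i, Nat.factorial (β i) : ℂ) * ∏ m, ((t m : ℂ)) ^ (β m)
      rw [hadd β hs x y]
      ring
    rw [e1, hsplit, BellAux.mpderiv_mul α (BellAux.sm_ET _ _) (BellAux.sm_ET _ _),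
      Finset.sum_apply]
    refine Finset.sum_congr rfl (fun β hβ => ?_)
    have hβα : β ≤ α := Finset.mem_Iic.mp hβ
    simp only [Pi.smul_apply, Pi.mul_apply, smul_eq_mul]
    rw [BellAux.mpderiv_ET_Iic α β hβα, BellAux.mpderiv_ET_Iic α (α - β) tsub_le_self]
    have e2 : BellEval β (fun β' => a β' x) = mpderiv β (BellAux.ET
        ((Finset.Iic β).erase 0)
        (fun β' => a β' x / (∏ i, Nat.factorial (β' i) : ℂ))) 0 := rfl
    have e3 : BellEval (α - β) (fun β' => a β' y) = mpderiv (α - β) (BellAux.ET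
        ((Finset.Iic (α - β)).erase 0)
        (fun β' => a β' y / (∏ i, Nat.factorial (β' i) : ℂ))) 0 := rfl
    rw [← e2, ← e3]
  rw [hf α (x + y), hm x y, key, Finset.sum_mul]
  refine Finset.sum_congr rfl (fun β hβ => ?_)
  rw [hf β x, hf (α - β) y]
  ring


end
end

section
/- Let (P_n) be the three-term recurrence polynomials generating a polynomial hypergroup, and fix λ ∈ ℂ and constants c₁, c₂, d ∈ ℂ. Define φ_0(n) = P_n(λ), φ_1(n) = c₁ P_n'(λ), φ_2(n) = c₁² P_n''(λ) + c₂ P_n'(λ). Then (φ_0, φ_1, φ_2) is a generalized moment sequence of rank 1 (up to order 2): Σ_k c(m,n,k) φ_2(k) = φ_2(m)φ_0(n) + 2φ_1(m)φ_1(n) + φ_0(m)φ_2(n) for all m, n, together with the analogous equations of orders 0 and 1. -/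
/-!
By the Leibniz rule, the first two derivatives of the linearization identity
`P m * P n = ∑ k, c(m,n,k) P k` are again linearization identities, for `P'` and `P''`;
evaluated at `λ`, they give the moment equations.
-/

open Polynomial

section Linearization

variable {R A ι : Type*} [CommSemiring R] [CommSemiring A] [Algebra R A]
  {p q : R[X]} {s : Finset ι} {w : ι → R} {Q : ι → R[X]}

theorem Polynomial.derivative_sum_C_mul :
    derivative (∑ k ∈ s, C (w k) * Q k) = ∑ k ∈ s, C (w k) * derivative (Q k) := by
  simp only [derivative_sum, derivative_C_mul]

theorem Polynomial.derivative_linearization (h : p * q = ∑ k ∈ s, C (w k) * Q k) :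
    derivative p * q + p * derivative q = ∑ k ∈ s, C (w k) * derivative (Q k) := by
  rw [← derivative_mul, h, derivative_sum_C_mul]

theorem Polynomial.derivative_derivative_linearization (h : p * q = ∑ k ∈ s, C (w k) * Q k) :
    derivative (derivative p) * q + 2 * (derivative p * derivative q) +
        p * derivative (derivative q) =
      ∑ k ∈ s, C (w k) * derivative (derivative (Q k)) := by
  rw [← derivative_sum_C_mul, ← derivative_linearization h]
  simp only [derivative_add, derivative_mul]
  ring

theorem Polynomial.sum_algebraMap_mul_aeval_of_eq (x : A) (h : p = ∑ k ∈ s, C (w k) * Q k) :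
    ∑ k ∈ s, algebraMap R A (w k) * aeval x (Q k) = aeval x p := by
  simp only [h, map_sum, map_mul, aeval_C]

end Linearization

/-- The coefficients are those of Faà di Bruno's formula `(f ∘ g)'' = g'² f'' + g'' f'` with
`g' = c₁`, `g'' = c₂`: order-two Leibniz identities survive this change of variable. -/
theorem Finset.sum_mul_faaDiBruno_two {K ι : Type*} [CommRing K] {s : Finset ι}
    {w f₁ f₂ : ι → K} {u₀ u₁ u₂ v₀ v₁ v₂ : K} (c₁ c₂ : K)
    (h₁ : ∑ k ∈ s, w k * f₁ k = u₁ * v₀ + u₀ * v₁)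
    (h₂ : ∑ k ∈ s, w k * f₂ k = u₂ * v₀ + 2 * (u₁ * v₁) + u₀ * v₂) :
    ∑ k ∈ s, w k * (c₁ ^ 2 * f₂ k + c₂ * f₁ k) =
      (c₁ ^ 2 * u₂ + c₂ * u₁) * v₀ + 2 * (c₁ * u₁) * (c₁ * v₁) + u₀ * (c₁ ^ 2 * v₂ + c₂ * v₁) := by
  simp only [mul_add, Finset.sum_add_distrib, mul_left_comm (w _), ← Finset.mul_sum, h₁, h₂]
  ring

theorem moment_sequence_rank_one_order_two_of_derivatives_general
    (P : ℕ → Polynomial ℝ) (lc : ℕ → ℕ → ℕ → ℝ)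
    (hlin : ∀ m n, P m * P n =
      ∑ k ∈ Finset.Icc (Nat.dist m n) (m + n), C (lc m n k) * P k)
    (lam c₁ c₂ : ℂ)
    (φ₀ φ₁ φ₂ : ℕ → ℂ)
    (hφ₀ : ∀ n, φ₀ n = Polynomial.aeval lam (P n))
    (hφ₁ : ∀ n, φ₁ n = c₁ * Polynomial.aeval lam (derivative (P n)))
    (hφ₂ : ∀ n, φ₂ n = c₁ ^ 2 * Polynomial.aeval lam (derivative (derivative (P n))) +
      c₂ * Polynomial.aeval lam (derivative (P n))) :
    ∀ m n : ℕ,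
      (∑ k ∈ Finset.Icc (Nat.dist m n) (m + n), (lc m n k : ℂ) * φ₀ k = φ₀ m * φ₀ n) ∧
      (∑ k ∈ Finset.Icc (Nat.dist m n) (m + n), (lc m n k : ℂ) * φ₁ k =
        φ₁ m * φ₀ n + φ₀ m * φ₁ n) ∧
      (∑ k ∈ Finset.Icc (Nat.dist m n) (m + n), (lc m n k : ℂ) * φ₂ k =
        φ₂ m * φ₀ n + 2 * φ₁ m * φ₁ n + φ₀ m * φ₂ n) := by
  intro m n
  have e₀ := sum_algebraMap_mul_aeval_of_eq lam (hlin m n)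
  have e₁ := sum_algebraMap_mul_aeval_of_eq lam (derivative_linearization (hlin m n))
  have e₂ := sum_algebraMap_mul_aeval_of_eq lam (derivative_derivative_linearization (hlin m n))
  simp only [Complex.coe_algebraMap, map_add, map_mul, map_ofNat] at e₀ e₁ e₂
  refine ⟨?_, ?_, ?_⟩
  · simpa only [hφ₀] using e₀
  · simp only [hφ₀, hφ₁, mul_left_comm _ c₁, ← Finset.mul_sum, e₁]
    ring
  · simpa only [hφ₀, hφ₁, hφ₂] using Finset.sum_mul_faaDiBruno_two c₁ c₂ e₁ e₂

theorem moment_sequence_rank_one_order_two_of_derivatives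
    (a b c : ℕ → ℝ) (P : ℕ → Polynomial ℝ) (lc : ℕ → ℕ → ℕ → ℝ)
    (ha0 : a 0 = 0) (hb0 : b 0 = 0)
    (hc : ∀ n, 0 < c n) (hb : ∀ n, 0 ≤ b n) (ha : ∀ n, 0 < a (n + 1))
    (hsum : ∀ n, a n + b n + c n = 1)
    (hP0 : P 0 = 1) (hP1 : P 1 = X)
    (hrec : ∀ n, 1 ≤ n →
      X * P n = C (a n) * P (n - 1) + C (b n) * P n + C (c n) * P (n + 1))
    (hlin : ∀ m n, P m * P n =
      ∑ k ∈ Finset.Icc (Nat.dist m n) (m + n), C (lc m n k) * P k)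
    (hnonneg : ∀ m n k, 0 ≤ lc m n k)
    (lam c₁ c₂ : ℂ)
    (φ₀ φ₁ φ₂ : ℕ → ℂ)
    (hφ₀ : ∀ n, φ₀ n = Polynomial.aeval lam (P n))
    (hφ₁ : ∀ n, φ₁ n = c₁ * Polynomial.aeval lam (derivative (P n)))
    (hφ₂ : ∀ n, φ₂ n = c₁ ^ 2 * Polynomial.aeval lam (derivative (derivative (P n))) +
      c₂ * Polynomial.aeval lam (derivative (P n))) :
    ∀ m n : ℕ,
      (∑ k ∈ Finset.Icc (Nat.dist m n) (m + n), (lc m n k : ℂ) * φ₀ k = φ₀ m * φ₀ n) ∧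
      (∑ k ∈ Finset.Icc (Nat.dist m n) (m + n), (lc m n k : ℂ) * φ₁ k =
        φ₁ m * φ₀ n + φ₀ m * φ₁ n) ∧
      (∑ k ∈ Finset.Icc (Nat.dist m n) (m + n), (lc m n k : ℂ) * φ₂ k =
        φ₂ m * φ₀ n + 2 * φ₁ m * φ₁ n + φ₀ m * φ₂ n) :=
  moment_sequence_rank_one_order_two_of_derivatives_general P lc hlin lam c₁ c₂ φ₀ φ₁ φ₂ hφ₀ hφ₁ hφ₂
end
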